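/- arXiv:1508.05803 — 9 statements merged into one kernel-verified Lean document; each statement's English description precedes it below -/
import Mathlib

section
/- There exist an integer K ≥ 2, reals nⁱ > 0 and n₁ⁱ with 0 < n₁ⁱ < nⁱ for i = 1,…,K satisfying n₁¹/n¹ < 1/2 and n₁²/n² > 1/2, and margin vectors z, x with 0 ≤ zⁱ ≤ xⁱ ≤ min(n₁ⁱ, nⁱ − n₁ⁱ) for every i, D(z) > 0 and D(x) > 0, such that max(T_l(z), T_r(z)) > max(T_l(x), T_r(x)). In particular, the maximum attainable CMH statistic T_cmh^max(x) = max(T_l(x), T_r(x)) is not monotonically increasing (equivalently, the minimum attainable p-value is not monotonically decreasing) as a function of each coordinate xⁱ on the region xⁱ ∈ [0, min(n₁ⁱ, nⁱ − n₁ⁱ)]. -/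
open Finset

/-- Non-monotonicity of the maximum attainable CMH statistic. There exist
`K ≥ 2`, strata parameters with `n1 1 / n 1 < 1/2` and `n1 2 / n 2 > 1/2`, and margin
vectors `z ≤ x` (coordinatewise, within the admissible region) such that
`max (T_l z) (T_r z) > max (T_l x) (T_r x)`. -/
theorem cmh_max_not_monotone :
    ∃ (K : ℕ) (hK : 2 ≤ K) (n n1 z x : Fin K → ℝ),
      (∀ i, 0 < n i) ∧
      (∀ i, 0 < n1 i ∧ n1 i < n i) ∧
      n1 ⟨0, by omega⟩ / n ⟨0, by omega⟩ < 1 / 2 ∧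
      n1 ⟨1, by omega⟩ / n ⟨1, by omega⟩ > 1 / 2 ∧
      (∀ i, 0 ≤ z i ∧ z i ≤ x i ∧ x i ≤ min (n1 i) (n i - n1 i)) ∧
      (let γ : Fin K → ℝ := fun i => n1 i / n i
       let D : (Fin K → ℝ) → ℝ :=
         fun w => ∑ i, γ i * (1 - γ i) * w i * (1 - w i / n i)
       let Tl : (Fin K → ℝ) → ℝ := fun w => (∑ i, γ i * w i) ^ 2 / D w
       let Tr : (Fin K → ℝ) → ℝ := fun w => (∑ i, (1 - γ i) * w i) ^ 2 / D w
       0 < D z ∧ 0 < D x ∧ max (Tl z) (Tr z) > max (Tl x) (Tr x)) := by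
  refine ⟨2, le_refl 2, ![4, 4], ![1, 3], ![1, 0], ![1, 1], ?_, ?_, ?_, ?_, ?_, ?_⟩
  · intro i; fin_cases i <;> norm_num
  · intro i; fin_cases i <;> norm_num
  · norm_num
  · norm_num
  · intro i; fin_cases i <;> norm_num
  · simp only [Fin.sum_univ_two]
    norm_num [Matrix.cons_val_zero, Matrix.cons_val_one, Matrix.head_cons]
end

section
/- Fix an integer K ≥ 1, reals nⁱ > 0 and n₁ⁱ with 0 < n₁ⁱ < nⁱ, γⁱ = n₁ⁱ/nⁱ, and bounds xⁱ with 0 ≤ xⁱ ≤ min(n₁ⁱ, nⁱ − n₁ⁱ). Fix an index j and values zⁱ ∈ [0, xⁱ] for all i ≠ j such that Σ_{i≠j} γⁱ(1−γⁱ)zⁱ(1−zⁱ/nⁱ) > 0. Then for each of the two functions g(t) = T_l(z¹,…,z^{j−1},t,z^{j+1},…,z^K) and g(t) = T_r(z¹,…,z^{j−1},t,z^{j+1},…,z^K), defined for t ∈ [0, xʲ], there exists t* ∈ [0, xʲ] such that g is monotonically non-increasing on [0, t*] and monotonically non-decreasing on [t*, xʲ]; consequently the maximum of g over [0, xʲ]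 equals max(g(0), g(xʲ)). -/
open Finset


lemma cmh_denpos {b S nn t : ℝ} (hb : 0 < b) (hS : 0 < S) (hnn : 0 < nn)
    (ht0 : 0 ≤ t) (htn : t ≤ nn) : 0 < S + b * t * (1 - t / nn) := by
  have h : 0 ≤ b * t * (1 - t / nn) := by
    apply mul_nonneg (mul_nonneg hb.le ht0)
    rw [sub_nonneg, div_le_one hnn]; exact htn
  linarith

lemma cmh_gderiv (a c b S nn : ℝ) {t : ℝ} (hden : S + b * t * (1 - t / nn) ≠ 0) :
    HasDerivAt (fun t => (a + c * t) ^ 2 / (S + b * t * (1 - t / nn)))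
      ((a + c * t) * (2 * c * S - a * b + t * (c * b + 2 * a * b / nn)) /
        (S + b * t * (1 - t / nn)) ^ 2) t := by
  have hN : HasDerivAt (fun t : ℝ => (a + c * t) ^ 2) (2 * (a + c * t) * c) t := by
    have h1 : HasDerivAt (fun t : ℝ => a + c * t) c t := by
      simpa using ((hasDerivAt_id t).const_mul c).const_add a
    have h2 := h1.pow 2
    exact h2.congr_deriv (by simp)
  have hDen : HasDerivAt (fun t : ℝ => S + b * t * (1 - t / nn)) (b - b / nn * (2 * t)) t := by
    have hfun : (fun t : ℝ => S + b * t * (1 - t / nn)) = fun t : ℝ => S + (b * t - b / nn * t ^ 2) := by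
      funext s; ring
    rw [hfun]
    have hb1 : HasDerivAt (fun t : ℝ => b * t) b t := by
      simpa using (hasDerivAt_id t).const_mul b
    have hb2 : HasDerivAt (fun t : ℝ => b / nn * t ^ 2) (b / nn * (2 * t)) t := by
      have := (hasDerivAt_pow 2 t).const_mul (b / nn)
      simpa using this
    exact (hb1.sub hb2).const_add S
  have h := hN.div hDen hden
  refine h.congr_deriv ?_
  have hnum : (a + c * t) * (2 * c * S - a * b + t * (c * b + 2 * a * b / nn))
      = 2 * (a + c * t) * c * (S + b * t * (1 - t / nn))
        - (a + c * t) ^ 2 * (b - b / nn * (2 * t)) := by ring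
  rw [hnum]

lemma cmh_key (a c b S nn X : ℝ) (ha : 0 ≤ a) (hc : 0 < c) (hb : 0 < b)
    (hS : 0 < S) (hnn : 0 < nn) (hX0 : 0 ≤ X) (hXn : X ≤ nn)
    (g : ℝ → ℝ) (hg : g = fun t => (a + c * t) ^ 2 / (S + b * t * (1 - t / nn))) :
    ∃ tstar ∈ Set.Icc (0 : ℝ) X, AntitoneOn g (Set.Icc 0 tstar) ∧
      MonotoneOn g (Set.Icc tstar X) ∧
      ∀ t ∈ Set.Icc (0 : ℝ) X, g t ≤ max (g 0) (g X) := by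
  subst hg
  set k : ℝ := c * b + 2 * a * b / nn with hkdef
  have hk : 0 < k := by
    rw [hkdef]
    have h1 : 0 < c * b := mul_pos hc hb
    have h2 : 0 ≤ 2 * a * b / nn := by positivity
    linarith
  set r : ℝ := (a * b - 2 * c * S) / k with hrdef
  have hmem : max 0 (min r X) ∈ Set.Icc (0:ℝ) X :=
    ⟨le_max_left _ _, max_le hX0 (min_le_right r X)⟩
  have hanti : AntitoneOn (fun t => (a + c * t) ^ 2 / (S + b * t * (1 - t / nn)))
      (Set.Icc 0 (max 0 (min r X))) := by
    apply antitoneOn_of_deriv_nonpos (convex_Icc _ _)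
    · intro t ht
      have ht0 : 0 ≤ t := ht.1
      have htn : t ≤ nn := le_trans ht.2 (le_trans (max_le hX0 (min_le_right r X)) hXn)
      exact (cmh_gderiv a c b S nn (cmh_denpos hb hS hnn ht0 htn).ne').continuousAt.continuousWithinAt
    · rw [interior_Icc]
      intro t ht
      have htn : t ≤ nn := le_trans ht.2.le (le_trans (max_le hX0 (min_le_right r X)) hXn)
      exact (cmh_gderiv a c b S nn (cmh_denpos hb hS hnn ht.1.le htn).ne').differentiableAt.differentiableWithinAt
    · rw [interior_Icc]
      intro t ht
      have ht0 : 0 < t := ht.1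
      have htn : t ≤ nn := le_trans ht.2.le (le_trans (max_le hX0 (min_le_right r X)) hXn)
      have hden := cmh_denpos hb hS hnn ht0.le htn
      rw [(cmh_gderiv a c b S nn hden.ne').deriv]
      apply div_nonpos_of_nonpos_of_nonneg _ (sq_nonneg _)
      have htr : t < r := by
        by_contra hcon
        push_neg at hcon
        have : max 0 (min r X) ≤ t := max_le ht0.le (le_trans (min_le_left r X) hcon)
        exact absurd ht.2 (not_lt.2 this)
      have hLt : 2 * c * S - a * b + t * k < 0 := by
        have : t * k < a * b - 2 * c * S := (lt_div_iff₀ hk).1 htr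
        linarith
      have hpos1 : 0 ≤ a + c * t := by positivity
      exact mul_nonpos_of_nonneg_of_nonpos hpos1 hLt.le
  have hmono : MonotoneOn (fun t => (a + c * t) ^ 2 / (S + b * t * (1 - t / nn)))
      (Set.Icc (max 0 (min r X)) X) := by
    apply monotoneOn_of_deriv_nonneg (convex_Icc _ _)
    · intro t ht
      have ht0 : 0 ≤ t := le_trans (le_max_left _ _) ht.1
      have htn : t ≤ nn := le_trans ht.2 hXn
      exact (cmh_gderiv a c b S nn (cmh_denpos hb hS hnn ht0 htn).ne').continuousAt.continuousWithinAt
    · rw [interior_Icc]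
      intro t ht
      have ht0 : 0 ≤ t := le_trans (le_max_left _ _) ht.1.le
      have htn : t ≤ nn := le_trans ht.2.le hXn
      exact (cmh_gderiv a c b S nn (cmh_denpos hb hS hnn ht0 htn).ne').differentiableAt.differentiableWithinAt
    · rw [interior_Icc]
      intro t ht
      have ht0 : 0 ≤ t := le_trans (le_max_left _ _) ht.1.le
      have htn : t ≤ nn := le_trans ht.2.le hXn
      have hden := cmh_denpos hb hS hnn ht0 htn
      rw [(cmh_gderiv a c b S nn hden.ne').deriv]
      apply div_nonneg _ (sq_nonneg _)
      have hrt : r ≤ t := by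
        rcases le_total r X with hrX | hXr
        · have : min r X = r := min_eq_left hrX
          calc r = min r X := this.symm
            _ ≤ max 0 (min r X) := le_max_right _ _
            _ ≤ t := ht.1.le
        · exfalso
          have : X ≤ max 0 (min r X) := le_trans (min_eq_right hXr).symm.le (le_max_right _ _)
          exact absurd ht.2 (not_lt.2 (le_trans this ht.1.le))
      have hLt : 0 ≤ 2 * c * S - a * b + t * k := by
        have : a * b - 2 * c * S ≤ t * k := (div_le_iff₀ hk).1 hrt
        linarith
      have hpos1 : 0 ≤ a + c * t := by positivity
      exact mul_nonneg hpos1 hLt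
  refine ⟨max 0 (min r X), hmem, hanti, hmono, ?_⟩
  intro t ht
  rcases le_total t (max 0 (min r X)) with h | h
  · exact le_trans (hanti ⟨le_refl 0, hmem.1⟩ ⟨ht.1, h⟩ ht.1) (le_max_left _ _)
  · exact le_trans (hmono ⟨h, ht.2⟩ ⟨hmem.2, le_refl X⟩ ht.2) (le_max_right _ _)


/-- Coordinatewise quasiconvexity of `T_l` and `T_r`. Fixing all coordinates
except the `j`-th, each of `t ↦ T_l (update z j t)` and `t ↦ T_r (update z j t)` on
`[0, x j]` is non-increasing up to some point `t*` and non-decreasing afterwards;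
consequently its maximum over `[0, x j]` is `max (g 0) (g (x j))`. -/
theorem cmh_coordinatewise_quasiconvex
    (K : ℕ) (hK : 1 ≤ K)
    (n n1 : Fin K → ℝ)
    (hn : ∀ i, 0 < n i)
    (hn1 : ∀ i, 0 < n1 i ∧ n1 i < n i)
    (γ : Fin K → ℝ) (hγ : γ = fun i => n1 i / n i)
    (D : (Fin K → ℝ) → ℝ)
    (hD : D = fun z => ∑ i, γ i * (1 - γ i) * z i * (1 - z i / n i))
    (Tl : (Fin K → ℝ) → ℝ) (hTl : Tl = fun z => (∑ i, γ i * z i) ^ 2 / D z)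
    (Tr : (Fin K → ℝ) → ℝ) (hTr : Tr = fun z => (∑ i, (1 - γ i) * z i) ^ 2 / D z)
    (x : Fin K → ℝ)
    (hx : ∀ i, 0 ≤ x i ∧ x i ≤ min (n1 i) (n i - n1 i))
    (j : Fin K) (z : Fin K → ℝ)
    (hz : ∀ i, i ≠ j → 0 ≤ z i ∧ z i ≤ x i)
    (hpos : 0 < ∑ i ∈ Finset.univ.erase j,
      γ i * (1 - γ i) * z i * (1 - z i / n i)) :
    (let g : ℝ → ℝ := fun t => Tl (Function.update z j t)
     ∃ tstar ∈ Set.Icc (0 : ℝ) (x j),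
       AntitoneOn g (Set.Icc 0 tstar) ∧ MonotoneOn g (Set.Icc tstar (x j)) ∧
       ∀ t ∈ Set.Icc (0 : ℝ) (x j), g t ≤ max (g 0) (g (x j))) ∧
    (let g : ℝ → ℝ := fun t => Tr (Function.update z j t)
     ∃ tstar ∈ Set.Icc (0 : ℝ) (x j),
       AntitoneOn g (Set.Icc 0 tstar) ∧ MonotoneOn g (Set.Icc tstar (x j)) ∧
       ∀ t ∈ Set.Icc (0 : ℝ) (x j), g t ≤ max (g 0) (g (x j))) := by
  have hγ0 : ∀ i, 0 < γ i := by
    intro i; rw [hγ]; exact div_pos (hn1 i).1 (hn i)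
  have hγ1 : ∀ i, γ i < 1 := by
    intro i; rw [hγ]; exact (div_lt_one (hn i)).2 (hn1 i).2
  set S : ℝ := ∑ i ∈ Finset.univ.erase j, γ i * (1 - γ i) * z i * (1 - z i / n i) with hSdef
  have hDsum : ∀ t : ℝ, D (Function.update z j t)
      = S + γ j * (1 - γ j) * t * (1 - t / n j) := by
    intro t
    rw [hD, hSdef]
    simp only
    rw [← Finset.sum_erase_add _ _ (Finset.mem_univ j)]
    congr 1
    · exact Finset.sum_congr rfl fun i hi => by
        rw [Function.update_of_ne (Finset.mem_erase.1 hi).1]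
    · rw [Function.update_self]
  have hX0 : 0 ≤ x j := (hx j).1
  have hXn : x j ≤ n j :=
    le_trans ((hx j).2.trans (min_le_left _ _)) (hn1 j).2.le
  have hb : 0 < γ j * (1 - γ j) := mul_pos (hγ0 j) (by linarith [hγ1 j])
  constructor
  · -- Tl
    have hsum : ∀ t : ℝ, (∑ i, γ i * Function.update z j t i)
        = (∑ i ∈ Finset.univ.erase j, γ i * z i) + γ j * t := by
      intro t
      rw [← Finset.sum_erase_add _ _ (Finset.mem_univ j)]
      congr 1
      · exact Finset.sum_congr rfl fun i hi => by
          rw [Function.update_of_ne (Finset.mem_erase.1 hi).1]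
      · rw [Function.update_self]
    have hfun : (fun t => Tl (Function.update z j t))
        = fun t => ((∑ i ∈ Finset.univ.erase j, γ i * z i) + γ j * t) ^ 2
            / (S + γ j * (1 - γ j) * t * (1 - t / n j)) := by
      funext t
      rw [hTl]; simp only; rw [hsum t, hDsum t]
    have ha : 0 ≤ ∑ i ∈ Finset.univ.erase j, γ i * z i :=
      Finset.sum_nonneg fun i hi =>
        mul_nonneg (hγ0 i).le (hz i (Finset.mem_erase.1 hi).1).1
    exact cmh_key _ (γ j) (γ j * (1 - γ j)) S (n j) (x j) ha (hγ0 j) hb hpos (hn j)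
      hX0 hXn _ hfun
  · -- Tr
    have hsum : ∀ t : ℝ, (∑ i, (1 - γ i) * Function.update z j t i)
        = (∑ i ∈ Finset.univ.erase j, (1 - γ i) * z i) + (1 - γ j) * t := by
      intro t
      rw [← Finset.sum_erase_add _ _ (Finset.mem_univ j)]
      congr 1
      · exact Finset.sum_congr rfl fun i hi => by
          rw [Function.update_of_ne (Finset.mem_erase.1 hi).1]
      · rw [Function.update_self]
    have hfun : (fun t => Tr (Function.update z j t))
        = fun t => ((∑ i ∈ Finset.univ.erase j, (1 - γ i) * z i) + (1 - γ j) * t) ^ 2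
            / (S + γ j * (1 - γ j) * t * (1 - t / n j)) := by
      funext t
      rw [hTr]; simp only; rw [hsum t, hDsum t]
    have ha : 0 ≤ ∑ i ∈ Finset.univ.erase j, (1 - γ i) * z i :=
      Finset.sum_nonneg fun i hi =>
        mul_nonneg (by linarith [hγ1 i]) (hz i (Finset.mem_erase.1 hi).1).1
    exact cmh_key _ (1 - γ j) (γ j * (1 - γ j)) S (n j) (x j) ha (by linarith [hγ1 j]) hb hpos (hn j)
      hX0 hXn _ hfun
end

section
/- Fix an integer K ≥ 1, reals nⁱ > 0 and n₁ⁱ with 0 < n₁ⁱ < nⁱ, γⁱ = n₁ⁱ/nⁱ, and bounds xⁱ with 0 < xⁱ ≤ min(n₁ⁱ, nⁱ − n₁ⁱ) for every i. Then for each of T_l and T_r, the supremum over the region {z : 0 ≤ zⁱ ≤ xⁱ for all i, D(z) > 0} is attained at a vertex of the box: there exists a nonempty subset S ⊆ {1,…,K} such that the point z_S defined by z_Sⁱ = xⁱ for i ∈ S and z_Sⁱ = 0 for i ∉ S achieves the supremum. In particular, the set of candidate maximizers has size at most 2^K. -/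
open Finset

set_option maxHeartbeats 1000000

namespace CMHAux

/-- quadratic convexity core: a convex quadratic nonpositive at `0` and `x`
is nonpositive on `[0,x]`. -/
lemma quad_core (a b c e d t x α : ℝ) (hb : 0 ≤ b) (he : 0 ≤ e)
    (ht : 0 ≤ t) (htx : t ≤ x) (hα : 0 ≤ α)
    (h0 : b ^ 2 ≤ α * d) (hx : (b + a * x) ^ 2 ≤ α * (d + c * x - e * x ^ 2)) :
    (b + a * t) ^ 2 ≤ α * (d + c * t - e * t ^ 2) := by
  rcases eq_or_lt_of_le (ht.trans htx) with hx0 | hx0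
  · have ht0 : t = 0 := le_antisymm (htx.trans hx0.symm.le) ht
    subst ht0
    simpa using h0
  · nlinarith [mul_nonneg (mul_nonneg (mul_nonneg ht (sub_nonneg.2 htx)) hx0.le)
      (add_nonneg (sq_nonneg a) (mul_nonneg hα he)),
      mul_nonneg (sub_nonneg.2 htx) (sub_nonneg.2 h0),
      mul_nonneg ht (sub_nonneg.2 hx)]

lemma quad_div (a b c e d t x : ℝ) (hb : 0 ≤ b) (he : 0 ≤ e)
    (ht : 0 ≤ t) (htx : t ≤ x) (hd : 0 < d)
    (hdenx : 0 < d + c * x - e * x ^ 2) (hdent : 0 < d + c * t - e * t ^ 2) :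
    (b + a * t) ^ 2 / (d + c * t - e * t ^ 2) ≤
      max (b ^ 2 / d) ((b + a * x) ^ 2 / (d + c * x - e * x ^ 2)) := by
  set α := max (b ^ 2 / d) ((b + a * x) ^ 2 / (d + c * x - e * x ^ 2)) with hα
  have hα0 : 0 ≤ α := le_trans (div_nonneg (sq_nonneg b) hd.le) (le_max_left _ _)
  have h0 : b ^ 2 ≤ α * d := (div_le_iff₀ hd).mp (le_max_left _ _)
  have hx' : (b + a * x) ^ 2 ≤ α * (d + c * x - e * x ^ 2) :=
    (div_le_iff₀ hdenx).mp (le_max_right _ _)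
  rw [div_le_iff₀ hdent]
  exact quad_core a b c e d t x α hb he ht htx hα0 h0 hx'

lemma mono_case (a c n t x : ℝ) (hc : 0 < c) (hn : 0 < n) (ht : 0 < t)
    (htx : t ≤ x) (hxn : x < n) :
    (a * t) ^ 2 / (c * t * (1 - t / n)) ≤ (a * x) ^ 2 / (c * x * (1 - x / n)) := by
  have hxpos : 0 < x := ht.trans_le htx
  have h1 : 0 < 1 - t / n := by
    rw [sub_pos, div_lt_one hn]; linarith
  have h2 : 0 < 1 - x / n := by
    rw [sub_pos, div_lt_one hn]; linarith
  rw [div_le_div_iff₀ (by positivity) (by positivity)]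
  have hkey : t * (1 - x / n) ≤ x * (1 - t / n) := by
    have : x * (1 - t / n) - t * (1 - x / n) = x - t := by ring
    linarith
  calc (a * t) ^ 2 * (c * x * (1 - x / n))
      = a ^ 2 * c * t * x * (t * (1 - x / n)) := by ring
    _ ≤ a ^ 2 * c * t * x * (x * (1 - t / n)) := by
        apply mul_le_mul_of_nonneg_left hkey; positivity
    _ = (a * x) ^ 2 * (c * t * (1 - t / n)) := by ring

variable {K : ℕ}

noncomputable def Df (c n : Fin K → ℝ) (z : Fin K → ℝ) : ℝ :=
  ∑ i, c i * z i * (1 - z i / n i)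

noncomputable def Tf (a c n : Fin K → ℝ) (z : Fin K → ℝ) : ℝ :=
  (∑ i, a i * z i) ^ 2 / Df c n z

lemma sum_update_univ (F : Fin K → ℝ → ℝ) (z : Fin K → ℝ) (i : Fin K) (v : ℝ) :
    ∑ j, F j (Function.update z i v j) = F i v + ∑ j ∈ univ.erase i, F j (z j) := by
  rw [← Finset.add_sum_erase _ (fun j => F j (Function.update z i v j)) (mem_univ i)]
  congr 1
  · rw [Function.update_self]
  · exact Finset.sum_congr rfl fun j hj => by
      rw [Function.update_of_ne (Finset.ne_of_mem_erase hj)]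

lemma vertex_sup (K : ℕ) (hK : 1 ≤ K) (c a n x : Fin K → ℝ)
    (hc : ∀ i, 0 < c i) (ha : ∀ i, 0 < a i) (hn : ∀ i, 0 < n i)
    (hx : ∀ i, 0 < x i ∧ x i < n i) :
    ∃ S : Finset (Fin K), S.Nonempty ∧
      IsGreatest {t : ℝ | ∃ z : Fin K → ℝ, (∀ i, 0 ≤ z i ∧ z i ≤ x i) ∧
          0 < Df c n z ∧ t = Tf a c n z}
        (Tf a c n (fun i => if i ∈ S then x i else 0)) := by
  -- nonnegativity of Df terms on the box
  have tnn : ∀ z : Fin K → ℝ, (∀ i, 0 ≤ z i ∧ z i ≤ x i) →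
      ∀ j, 0 ≤ c j * z j * (1 - z j / n j) := by
    intro z hz j
    have h1 : 0 ≤ 1 - z j / n j := by
      rw [sub_nonneg, div_le_one (hn j)]
      exact le_of_lt ((hz j).2.trans_lt (hx j).2)
    exact mul_nonneg (mul_nonneg (hc j).le (hz j).1) h1
  have hvbox : ∀ S : Finset (Fin K),
      ∀ i, 0 ≤ (if i ∈ S then x i else 0) ∧ (if i ∈ S then x i else 0) ≤ x i := by
    intro S i
    split_ifs
    · exact ⟨(hx i).1.le, le_refl _⟩
    · exact ⟨le_refl _, (hx i).1.le⟩
  have hvD : ∀ S : Finset (Fin K), S.Nonempty →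
      0 < Df c n (fun i => if i ∈ S then x i else 0) := by
    intro S ⟨i, hi⟩
    apply Finset.sum_pos' (fun j _ => tnn _ (hvbox S) j)
    refine ⟨i, mem_univ i, ?_⟩
    simp only [hi, if_true]
    have h1 : 0 < 1 - x i / n i := by
      rw [sub_pos, div_lt_one (hn i)]; exact (hx i).2
    exact mul_pos (mul_pos (hc i) (hx i).1) h1
  -- main induction: any point in the region is dominated by some nonempty vertex
  have within : ∀ m : ℕ, ∀ z : Fin K → ℝ, (∀ i, 0 ≤ z i ∧ z i ≤ x i) → 0 < Df c n z →
      (univ.filter fun i => z i ≠ 0 ∧ z i ≠ x i).card ≤ m →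
      ∃ S : Finset (Fin K), S.Nonempty ∧
        Tf a c n z ≤ Tf a c n (fun i => if i ∈ S then x i else 0) := by
    intro m
    induction m with
    | zero =>
      intro z hbox hD hcard
      have hfe : (univ.filter fun i => z i ≠ 0 ∧ z i ≠ x i) = ∅ :=
        Finset.card_eq_zero.mp (Nat.le_zero.mp hcard)
      have hall : ∀ i, z i = 0 ∨ z i = x i := by
        intro i
        by_contra h
        push_neg at h
        have : i ∈ (univ.filter fun i => z i ≠ 0 ∧ z i ≠ x i) :=
          mem_filter.2 ⟨mem_univ i, h⟩
        rw [hfe] at this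
        exact absurd this (Finset.notMem_empty i)
      refine ⟨univ.filter (fun i => z i ≠ 0), ?_, ?_⟩
      · rcases Finset.eq_empty_or_nonempty (univ.filter (fun i => z i ≠ 0)) with he | hne
        · exfalso
          have hz0 : ∀ i, z i = 0 := by
            intro i
            by_contra h
            have : i ∈ univ.filter (fun i => z i ≠ 0) := mem_filter.2 ⟨mem_univ i, h⟩
            rw [he] at this
            exact absurd this (Finset.notMem_empty i)
          have : Df c n z = 0 := by
            apply Finset.sum_eq_zero
            intro j _
            rw [hz0 j]; ring
          rw [this] at hD
          exact lt_irrefl 0 hD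
        · exact hne
      · have hzeq : z = fun i => if i ∈ univ.filter (fun i => z i ≠ 0) then x i else 0 := by
          funext i
          by_cases h : z i = 0
          · have hni : i ∉ univ.filter (fun i => z i ≠ 0) := by
              simp [h]
            rw [if_neg hni, h]
          · rcases hall i with h' | h'
            · exact absurd h' h
            · rw [if_pos (mem_filter.2 ⟨mem_univ i, h⟩), h']
        rw [← hzeq]
    | succ m ih =>
      intro z hbox hD hcard
      by_cases hne : (univ.filter fun i => z i ≠ 0 ∧ z i ≠ x i).Nonempty
      swap
      · rw [Finset.not_nonempty_iff_eq_empty] at hne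
        exact ih z hbox hD (by simp [hne])
      obtain ⟨i, hi⟩ := hne
      rw [mem_filter] at hi
      obtain ⟨-, hz0, hzx⟩ := hi
      have hzi : 0 < z i := (hbox i).1.lt_of_ne (Ne.symm hz0)
      have hzix : z i < x i := (hbox i).2.lt_of_ne hzx
      set b := ∑ j ∈ univ.erase i, a j * z j with hbdef
      set d := ∑ j ∈ univ.erase i, c j * z j * (1 - z j / n j) with hddef
      have hb0 : 0 ≤ b := Finset.sum_nonneg fun j _ => mul_nonneg (ha j).le (hbox j).1
      have hd0 : 0 ≤ d := Finset.sum_nonneg fun j _ => tnn z hbox j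
      have hsum : ∑ j, a j * z j = a i * z i + b :=
        (Finset.add_sum_erase univ (fun j => a j * z j) (mem_univ i)).symm
      have hDsum : Df c n z = c i * z i * (1 - z i / n i) + d :=
        (Finset.add_sum_erase univ (fun j => c j * z j * (1 - z j / n j)) (mem_univ i)).symm
      set z1 := Function.update z i (x i) with hz1def
      set z0 := Function.update z i 0 with hz0def
      have hsum1 : ∑ j, a j * z1 j = a i * x i + b :=
        sum_update_univ (fun j t => a j * t) z i (x i)
      have hD1 : Df c n z1 = c i * x i * (1 - x i / n i) + d :=
        sum_update_univ (fun j t => c j * t * (1 - t / n j)) z i (x i)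
      have hsum0 : ∑ j, a j * z0 j = a i * 0 + b :=
        sum_update_univ (fun j t => a j * t) z i 0
      have hD0 : Df c n z0 = c i * 0 * (1 - 0 / n i) + d :=
        sum_update_univ (fun j t => c j * t * (1 - t / n j)) z i 0
      have hbox1 : ∀ j, 0 ≤ z1 j ∧ z1 j ≤ x j := by
        intro j
        by_cases h : j = i
        · subst h; rw [hz1def, Function.update_self]
          exact ⟨(hx j).1.le, le_refl _⟩
        · rw [hz1def, Function.update_of_ne h]; exact hbox j
      have hbox0 : ∀ j, 0 ≤ z0 j ∧ z0 j ≤ x j := by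
        intro j
        by_cases h : j = i
        · subst h; rw [hz0def, Function.update_self]
          exact ⟨le_refl _, (hx j).1.le⟩
        · rw [hz0def, Function.update_of_ne h]; exact hbox j
      have himem : i ∈ univ.filter fun i => z i ≠ 0 ∧ z i ≠ x i :=
        mem_filter.2 ⟨mem_univ i, hz0, hzx⟩
      have hcard1 : (univ.filter fun j => z1 j ≠ 0 ∧ z1 j ≠ x j).card ≤ m := by
        have hsub : (univ.filter fun j => z1 j ≠ 0 ∧ z1 j ≠ x j) ⊆
            (univ.filter fun j => z j ≠ 0 ∧ z j ≠ x j).erase i := by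
          intro j hj
          rw [mem_filter] at hj
          obtain ⟨-, h1, h2⟩ := hj
          have hji : j ≠ i := by
            rintro rfl
            exact h2 (by rw [hz1def, Function.update_self])
          rw [hz1def, Function.update_of_ne hji] at h1 h2
          exact Finset.mem_erase.2 ⟨hji, mem_filter.2 ⟨mem_univ j, h1, h2⟩⟩
        calc (univ.filter fun j => z1 j ≠ 0 ∧ z1 j ≠ x j).card
            ≤ ((univ.filter fun j => z j ≠ 0 ∧ z j ≠ x j).erase i).card :=
              Finset.card_le_card hsub
          _ = (univ.filter fun j => z j ≠ 0 ∧ z j ≠ x j).card - 1 :=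
              Finset.card_erase_of_mem himem
          _ ≤ m := by omega
      have hcard0 : (univ.filter fun j => z0 j ≠ 0 ∧ z0 j ≠ x j).card ≤ m := by
        have hsub : (univ.filter fun j => z0 j ≠ 0 ∧ z0 j ≠ x j) ⊆
            (univ.filter fun j => z j ≠ 0 ∧ z j ≠ x j).erase i := by
          intro j hj
          rw [mem_filter] at hj
          obtain ⟨-, h1, h2⟩ := hj
          have hji : j ≠ i := by
            rintro rfl
            exact h1 (by rw [hz0def, Function.update_self])
          rw [hz0def, Function.update_of_ne hji] at h1 h2
          exact Finset.mem_erase.2 ⟨hji, mem_filter.2 ⟨mem_univ j, h1, h2⟩⟩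
        calc (univ.filter fun j => z0 j ≠ 0 ∧ z0 j ≠ x j).card
            ≤ ((univ.filter fun j => z j ≠ 0 ∧ z j ≠ x j).erase i).card :=
              Finset.card_le_card hsub
          _ = (univ.filter fun j => z j ≠ 0 ∧ z j ≠ x j).card - 1 :=
              Finset.card_erase_of_mem himem
          _ ≤ m := by omega
      have hxipos : 0 < 1 - x i / n i := by
        rw [sub_pos, div_lt_one (hn i)]; exact (hx i).2
      have hzipos : 0 < 1 - z i / n i := by
        rw [sub_pos, div_lt_one (hn i)]; exact hzix.trans (hx i).2
      have hD1pos : 0 < Df c n z1 := by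
        rw [hD1]
        have : 0 < c i * x i * (1 - x i / n i) :=
          mul_pos (mul_pos (hc i) (hx i).1) hxipos
        linarith
      rcases hd0.lt_or_eq with hdpos | hdzero
      · -- d > 0 : quasiconvexity step
        have hD0pos : 0 < Df c n z0 := by rw [hD0]; simpa using hdpos
        have hTz : Tf a c n z =
            (b + a i * z i) ^ 2 / (d + c i * z i - c i / n i * z i ^ 2) := by
          unfold Tf
          rw [hsum, hDsum]
          congr 1
          · ring
          · field_simp
            ring
        have hTz0 : Tf a c n z0 = b ^ 2 / d := by
          unfold Tf
          rw [hsum0, hD0]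
          congr 1 <;> ring
        have hTz1 : Tf a c n z1 =
            (b + a i * x i) ^ 2 / (d + c i * x i - c i / n i * x i ^ 2) := by
          unfold Tf
          rw [hsum1, hD1]
          congr 1
          · ring
          · field_simp
            ring
        have hdenx : 0 < d + c i * x i - c i / n i * x i ^ 2 := by
          have : c i * x i * (1 - x i / n i) = c i * x i - c i / n i * x i ^ 2 := by
            field_simp
          nlinarith [mul_pos (mul_pos (hc i) (hx i).1) hxipos]
        have hdent : 0 < d + c i * z i - c i / n i * z i ^ 2 := by
          have : c i * z i * (1 - z i / n i) = c i * z i - c i / n i * z i ^ 2 := by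
            field_simp
          nlinarith [mul_pos (mul_pos (hc i) hzi) hzipos]
        have key := quad_div (a i) b (c i) (c i / n i) d (z i) (x i) hb0
          (div_nonneg (hc i).le (hn i).le) (hbox i).1 hzix.le hdpos hdenx hdent
        rw [← hTz, ← hTz0, ← hTz1] at key
        rcases le_total (Tf a c n z0) (Tf a c n z1) with h | h
        · obtain ⟨S, hS, hle⟩ := ih z1 hbox1 hD1pos hcard1
          exact ⟨S, hS, (key.trans (max_le h (le_refl _))).trans hle⟩
        · obtain ⟨S, hS, hle⟩ := ih z0 hbox0 hD0pos hcard0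
          exact ⟨S, hS, (key.trans (max_le (le_refl _) h)).trans hle⟩
      · -- d = 0 : all other coordinates vanish; monotone step
        have hdz : d = 0 := hdzero.symm
        have hsumz : ∑ j ∈ univ.erase i, c j * z j * (1 - z j / n j) = 0 := by
          rw [← hddef]; exact hdz
        have hzj : ∀ j ∈ univ.erase i, c j * z j * (1 - z j / n j) = 0 :=
          (Finset.sum_eq_zero_iff_of_nonneg (fun j _ => tnn z hbox j)).mp hsumz
        have hz_zero : ∀ j ∈ univ.erase i, z j = 0 := by
          intro j hj
          by_contra h
          have hzjpos : 0 < z j := (hbox j).1.lt_of_ne (Ne.symm h)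
          have h1 : 0 < 1 - z j / n j := by
            rw [sub_pos, div_lt_one (hn j)]
            exact (hbox j).2.trans_lt (hx j).2
          have : 0 < c j * z j * (1 - z j / n j) :=
            mul_pos (mul_pos (hc j) hzjpos) h1
          rw [hzj j hj] at this
          exact lt_irrefl 0 this
        have hbzero : b = 0 := by
          rw [hbdef]
          apply Finset.sum_eq_zero
          intro j hj
          rw [hz_zero j hj]; ring
        have e1 : Tf a c n z = (a i * z i) ^ 2 / (c i * z i * (1 - z i / n i)) := by
          unfold Tf
          rw [hsum, hDsum, hbzero, hdz]
          congr 1 <;> ring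
        have e2 : Tf a c n z1 = (a i * x i) ^ 2 / (c i * x i * (1 - x i / n i)) := by
          unfold Tf
          rw [hsum1, hD1, hbzero, hdz]
          congr 1 <;> ring
        have hT1 : Tf a c n z ≤ Tf a c n z1 := by
          rw [e1, e2]
          exact mono_case (a i) (c i) (n i) (z i) (x i) (hc i) (hn i) hzi hzix.le (hx i).2
        obtain ⟨S, hS, hle⟩ := ih z1 hbox1 hD1pos hcard1
        exact ⟨S, hS, hT1.trans hle⟩
  -- pick the maximizing nonempty vertex
  have hFinNE : Nonempty (Fin K) := ⟨⟨0, hK⟩⟩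
  obtain ⟨S₀, hS₀mem, hmax⟩ := Finset.exists_max_image
    ((univ : Finset (Finset (Fin K))).filter (·.Nonempty))
    (fun S => Tf a c n (fun i => if i ∈ S then x i else 0))
    ⟨univ, mem_filter.2 ⟨mem_univ _, univ_nonempty⟩⟩
  have hS₀ne : S₀.Nonempty := (mem_filter.mp hS₀mem).2
  refine ⟨S₀, hS₀ne, ⟨⟨fun i => if i ∈ S₀ then x i else 0, hvbox S₀, hvD S₀ hS₀ne, rfl⟩, ?_⟩⟩
  rintro t ⟨z, hbox, hDz, rfl⟩
  obtain ⟨S, hS, hle⟩ := within (univ.filter fun i => z i ≠ 0 ∧ z i ≠ x i).card z hbox hDz le_rfl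
  exact hle.trans (hmax S (mem_filter.2 ⟨mem_univ _, hS⟩))

end CMHAux

/-- Each of `T_l` and `T_r` attains its supremum over the region
`{z : 0 ≤ z i ≤ x i, D z > 0}` at a vertex of the box: there is a nonempty subset
`S ⊆ {1,…,K}` such that the point with `i`-th coordinate `x i` for `i ∈ S` and `0`
otherwise achieves the supremum. -/
theorem cmh_sup_attained_at_vertex
    (K : ℕ) (hK : 1 ≤ K)
    (n n1 : Fin K → ℝ)
    (hn : ∀ i, 0 < n i)
    (hn1 : ∀ i, 0 < n1 i ∧ n1 i < n i)
    (γ : Fin K → ℝ) (hγ : γ = fun i => n1 i / n i)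
    (D : (Fin K → ℝ) → ℝ)
    (hD : D = fun z => ∑ i, γ i * (1 - γ i) * z i * (1 - z i / n i))
    (Tl : (Fin K → ℝ) → ℝ) (hTl : Tl = fun z => (∑ i, γ i * z i) ^ 2 / D z)
    (Tr : (Fin K → ℝ) → ℝ) (hTr : Tr = fun z => (∑ i, (1 - γ i) * z i) ^ 2 / D z)
    (x : Fin K → ℝ)
    (hx : ∀ i, 0 < x i ∧ x i ≤ min (n1 i) (n i - n1 i)) :
    (∃ S : Finset (Fin K), S.Nonempty ∧
      IsGreatest
        {t : ℝ | ∃ z : Fin K → ℝ,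
          (∀ i, 0 ≤ z i ∧ z i ≤ x i) ∧ 0 < D z ∧ t = Tl z}
        (Tl (fun i => if i ∈ S then x i else 0))) ∧
    (∃ S : Finset (Fin K), S.Nonempty ∧
      IsGreatest
        {t : ℝ | ∃ z : Fin K → ℝ,
          (∀ i, 0 ≤ z i ∧ z i ≤ x i) ∧ 0 < D z ∧ t = Tr z}
        (Tr (fun i => if i ∈ S then x i else 0))) := by
  subst hγ hD hTl hTr
  have hγpos : ∀ i, 0 < n1 i / n i := fun i => div_pos (hn1 i).1 (hn i)
  have hγlt : ∀ i, n1 i / n i < 1 := fun i => (div_lt_one (hn i)).2 (hn1 i).2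
  have hc : ∀ i, 0 < (fun i => n1 i / n i * (1 - n1 i / n i)) i := by
    intro i
    exact mul_pos (hγpos i) (by linarith [hγlt i])
  have hx' : ∀ i, 0 < x i ∧ x i < n i := by
    intro i
    refine ⟨(hx i).1, ?_⟩
    calc x i ≤ min (n1 i) (n i - n1 i) := (hx i).2
      _ ≤ n1 i := min_le_left _ _
      _ < n i := (hn1 i).2
  constructor
  · exact CMHAux.vertex_sup K hK (fun i => n1 i / n i * (1 - n1 i / n i))
      (fun i => n1 i / n i) n x hc hγpos hn hx'
  · exact CMHAux.vertex_sup K hK (fun i => n1 i / n i * (1 - n1 i / n i))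
      (fun i => 1 - n1 i / n i) n x hc (fun i => by linarith [hγlt i]) hn hx'
end

section
/- Let K ≥ 1 be an integer, l₁,…,l_K positive reals, and α₁,…,α_K reals with 0 < α₁ ≤ α₂ ≤ … ≤ α_K ≤ 1. Then the maximum of T(S) = (Σ_{i∈S} lᵢ)² / (Σ_{i∈S} αᵢ lᵢ) over all nonempty subsets S ⊆ {1,…,K} is attained at a prefix: there exists R with 1 ≤ R ≤ K such that T({1,…,R}) ≥ T(S) for every nonempty S ⊆ {1,…,K}. -/
open Finset

/-- With positive weights `l i` and sorted coefficients
`0 < α 0 ≤ α 1 ≤ … ≤ 1`, the maximum of `T S = (∑ i ∈ S, l i)² / (∑ i ∈ S, α i * l i)`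
over all nonempty subsets `S` of `{1,…,K}` is attained at a prefix `{1,…,R}`. -/
theorem prefix_maximizer
    (K : ℕ) (hK : 1 ≤ K)
    (l α : Fin K → ℝ)
    (hl : ∀ i, 0 < l i)
    (hα : ∀ i, 0 < α i ∧ α i ≤ 1)
    (hmono : Monotone α)
    (T : Finset (Fin K) → ℝ)
    (hT : T = fun S => (∑ i ∈ S, l i) ^ 2 / (∑ i ∈ S, α i * l i)) :
    ∃ R : ℕ, 1 ≤ R ∧ R ≤ K ∧
      ∀ S : Finset (Fin K), S.Nonempty →
        T S ≤ T (Finset.univ.filter (fun i : Fin K => (i : ℕ) < R)) := by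
  subst hT
  obtain ⟨S, hSmem, hmax⟩ := Finset.exists_max_image
      ((univ : Finset (Finset (Fin K))).filter (fun S => S.Nonempty))
      (fun S => (∑ i ∈ S, l i) ^ 2 / (∑ i ∈ S, α i * l i))
      ⟨{⟨0, hK⟩}, by simp⟩
  simp only [mem_filter, mem_univ, true_and] at hSmem
  have hmax' : ∀ S' : Finset (Fin K), S'.Nonempty →
      (∑ i ∈ S', l i) ^ 2 / (∑ i ∈ S', α i * l i)
        ≤ (∑ i ∈ S, l i) ^ 2 / (∑ i ∈ S, α i * l i) := by
    intro S' h
    exact hmax S' (by simp [h])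
  set L := ∑ k ∈ S, l k with hL
  set A := ∑ k ∈ S, α k * l k with hA
  have hLpos : 0 < L := Finset.sum_pos (fun k _ => hl k) hSmem
  have hApos : 0 < A := Finset.sum_pos (fun k _ => mul_pos (hα k).1 (hl k)) hSmem
  have hclosed : ∀ i ∈ S, ∀ j : Fin K, j ≤ i → j ∈ S := by
    intro i hi j hji
    by_contra hj
    have hαj : α j ≤ α i := hmono hji
    by_cases hcase : α j * L ≤ 2 * A
    · -- inserting j strictly improves T, contradiction
      have hins : (∑ k ∈ insert j S, l k) = l j + L := Finset.sum_insert hj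
      have hins2 : (∑ k ∈ insert j S, α k * l k) = α j * l j + A :=
        Finset.sum_insert hj
      have hlt : L ^ 2 / A < (l j + L) ^ 2 / (α j * l j + A) := by
        rw [div_lt_div_iff₀ hApos (add_pos (mul_pos (hα j).1 (hl j)) hApos)]
        nlinarith [mul_le_mul_of_nonneg_right hcase (mul_pos hLpos (hl j)).le,
          mul_pos hApos (mul_pos (hl j) (hl j))]
      have hle := hmax' (insert j S) ⟨j, mem_insert_self _ _⟩
      rw [hins, hins2] at hle
      linarith
    · push_neg at hcase
      have h1 : 2 * A < α i * L :=
        lt_of_lt_of_le hcase (mul_le_mul_of_nonneg_right hαj hLpos.le)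
      rcases (S.erase i).eq_empty_or_nonempty with he | he
      · -- then S = {i} and the inequality 2A < αᵢL is impossible
        have hSi : S = {i} := by
          rcases (Finset.erase_eq_empty_iff S i).1 he with h | h
          · exact absurd h (Finset.nonempty_iff_ne_empty.mp hSmem)
          · exact h
        have hL' : L = l i := by rw [hL, hSi, Finset.sum_singleton]
        have hA' : A = α i * l i := by rw [hA, hSi, Finset.sum_singleton]
        rw [hL', hA'] at h1
        nlinarith [hl i, (hα i).1]
      · -- erasing i strictly improves T, contradiction
        have hLrem : (∑ k ∈ S.erase i, l k) = L - l i := by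
          have := Finset.sum_erase_add S l hi
          rw [← hL] at this; linarith
        have hArem : (∑ k ∈ S.erase i, α k * l k) = A - α i * l i := by
          have := Finset.sum_erase_add S (fun k => α k * l k) hi
          rw [← hA] at this; linarith
        have hA'pos : 0 < A - α i * l i := by
          rw [← hArem]
          exact Finset.sum_pos (fun k _ => mul_pos (hα k).1 (hl k)) he
        have hlt : L ^ 2 / A < (L - l i) ^ 2 / (A - α i * l i) := by
          rw [div_lt_div_iff₀ hApos hA'pos]
          nlinarith [mul_lt_mul_of_pos_right h1 hLpos,
            mul_pos (mul_pos (hl i) (hl i)) hApos, hl i]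
        have hle := hmax' (S.erase i) he
        rw [hLrem, hArem] at hle
        linarith
  refine ⟨(S.max' hSmem).val + 1, Nat.succ_le_succ (Nat.zero_le _),
    Nat.succ_le_of_lt (S.max' hSmem).isLt, ?_⟩
  have hset : (univ.filter (fun i : Fin K => (i : ℕ) < (S.max' hSmem).val + 1)) = S := by
    ext k
    simp only [mem_filter, mem_univ, true_and, Nat.lt_succ_iff]
    constructor
    · intro h
      exact hclosed _ (S.max'_mem hSmem) k (Fin.le_def.mpr h)
    · intro h
      exact Fin.le_def.mp (S.le_max' k h)
  rw [hset]
  intro S' h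
  exact hmax' S' h
end

section
/- Let K ≥ 1 be an integer. Suppose that for every choice of positive reals l₁,…,l_K and reals 0 < α₁ ≤ … ≤ α_K ≤ 1, the maximum of T(S) = (Σ_{i∈S} lᵢ)²/(Σ_{i∈S} αᵢlᵢ) over nonempty S ⊆ {1,…,K} is attained at a prefix {1,…,R} for some 1 ≤ R ≤ K. Then for every choice of positive reals l₁,…,l_{K+1} and reals 0 < α₁ ≤ … ≤ α_{K+1} ≤ 1, the maximum of T(S) over nonempty S ⊆ {1,…,K+1} is attained at a prefix {1,…,R′} for some 1 ≤ R′ ≤ K+1. -/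
open Finset

private lemma sum_al_pos' {n : ℕ} (l α : Fin n → ℝ) (hl : ∀ i, 0 < l i)
    (hα : ∀ i, 0 < α i ∧ α i ≤ 1) {S : Finset (Fin n)} (hS : S.Nonempty) :
    0 < ∑ i ∈ S, α i * l i :=
  Finset.sum_pos (fun i _ => mul_pos (hα i).1 (hl i)) hS

private lemma exchange' {n : ℕ} (l α : Fin n → ℝ) (hl : ∀ i, 0 < l i)
    (hα : ∀ i, 0 < α i ∧ α i ≤ 1)
    {S : Finset (Fin n)} (hS : S.Nonempty)
    (hmax : ∀ S' : Finset (Fin n), S'.Nonempty →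
      (∑ i ∈ S', l i)^2 / (∑ i ∈ S', α i * l i) ≤ (∑ i ∈ S, l i)^2 / (∑ i ∈ S, α i * l i))
    {i j : Fin n} (hij : α i ≤ α j) (hjS : j ∈ S) (hiS : i ∉ S) :
    (∑ k ∈ S, l k)^2 / (∑ k ∈ S, α k * l k) ≤
      (∑ k ∈ insert i S, l k)^2 / (∑ k ∈ insert i S, α k * l k) := by
  set L := ∑ k ∈ S, l k with hLdef
  set A := ∑ k ∈ S, α k * l k with hAdef
  have hL : 0 < L := Finset.sum_pos (fun i _ => hl i) hS
  have hA : 0 < A := sum_al_pos' l α hl hα hS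
  have step1 : α j * L^2 ≤ A * (2*L - l j) := by
    rcases (S.erase j).eq_empty_or_nonempty with he | hne
    · have hSj : S = {j} := by
        apply Finset.eq_singleton_iff_unique_mem.mpr
        refine ⟨hjS, fun x hx => ?_⟩
        by_contra h
        exact absurd (Finset.mem_erase.mpr ⟨h, hx⟩) (by simp [he])
      have hLj : L = l j := by rw [hLdef, hSj]; simp
      have hAj : A = α j * l j := by rw [hAdef, hSj]; simp
      rw [hLj, hAj]; nlinarith [hl j, (hα j).1]
    · have h1 := hmax (S.erase j) hne
      have hL' : ∑ k ∈ S.erase j, l k = L - l j := Finset.sum_erase_eq_sub hjS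
      have hA' : ∑ k ∈ S.erase j, α k * l k = A - α j * l j :=
        Finset.sum_erase_eq_sub hjS
      have hA'pos : 0 < A - α j * l j := by
        rw [← hA']; exact sum_al_pos' l α hl hα hne
      rw [hL', hA'] at h1
      have h2 := (div_le_div_iff₀ hA'pos hA).mp h1
      nlinarith [hl j]
  have hLi : ∑ k ∈ insert i S, l k = l i + L := Finset.sum_insert hiS
  have hAi : ∑ k ∈ insert i S, α k * l k = α i * l i + A := Finset.sum_insert hiS
  rw [hLi, hAi]
  have hApos' : 0 < α i * l i + A := by
    have := mul_pos (hα i).1 (hl i); linarith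
  rw [div_le_div_iff₀ hA hApos']
  have key : α i * L^2 ≤ A * (2*L + l i) := by
    nlinarith [hl i, hl j, sq_nonneg L, mul_nonneg (sub_nonneg.mpr hij) (sq_nonneg L)]
  nlinarith [mul_le_mul_of_nonneg_left key (le_of_lt (hl i)), hl i]


/-- Induction step for the prefix-maximizer property. If for every choice of
positive weights and sorted coefficients in `(0,1]` on `K` indices, the maximum of
`T S = (∑ i ∈ S, l i)² / (∑ i ∈ S, α i * l i)` over nonempty subsets is attained at a
prefix, then the same holds on `K + 1` indices. -/
theorem prefix_maximizer_induction_step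
    (K : ℕ) (hK : 1 ≤ K)
    (ih : ∀ l α : Fin K → ℝ,
      (∀ i, 0 < l i) → (∀ i, 0 < α i ∧ α i ≤ 1) → Monotone α →
      ∃ R : ℕ, 1 ≤ R ∧ R ≤ K ∧
        ∀ S : Finset (Fin K), S.Nonempty →
          (∑ i ∈ S, l i) ^ 2 / (∑ i ∈ S, α i * l i) ≤
          (∑ i ∈ Finset.univ.filter (fun i : Fin K => (i : ℕ) < R), l i) ^ 2 /
            (∑ i ∈ Finset.univ.filter (fun i : Fin K => (i : ℕ) < R), α i * l i)) :
    ∀ l α : Fin (K + 1) → ℝ,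
      (∀ i, 0 < l i) → (∀ i, 0 < α i ∧ α i ≤ 1) → Monotone α →
      ∃ R : ℕ, 1 ≤ R ∧ R ≤ K + 1 ∧
        ∀ S : Finset (Fin (K + 1)), S.Nonempty →
          (∑ i ∈ S, l i) ^ 2 / (∑ i ∈ S, α i * l i) ≤
          (∑ i ∈ Finset.univ.filter (fun i : Fin (K + 1) => (i : ℕ) < R), l i) ^ 2 /
            (∑ i ∈ Finset.univ.filter (fun i : Fin (K + 1) => (i : ℕ) < R), α i * l i) := by
  intro l α hl hα hmono
  set f : Finset (Fin (K+1)) → ℝ :=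
    fun S => (∑ i ∈ S, l i)^2 / (∑ i ∈ S, α i * l i) with hf
  -- a maximizer of f among nonempty sets
  obtain ⟨S₀, hS₀mem, hS₀max⟩ :=
    Finset.exists_max_image
      ((univ : Finset (Finset (Fin (K+1)))).filter Finset.Nonempty) f
      ⟨{0}, by simp [Finset.singleton_nonempty]⟩
  have hS₀ne : S₀.Nonempty := (Finset.mem_filter.mp hS₀mem).2
  -- among maximizers, pick one with maximal cardinality
  obtain ⟨S, hSmem, hScard⟩ :=
    Finset.exists_max_image
      ((univ : Finset (Finset (Fin (K+1)))).filter
        (fun T => T.Nonempty ∧ f S₀ ≤ f T)) Finset.card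
      ⟨S₀, by simp [hS₀ne]⟩
  obtain ⟨hSne, hSge⟩ := (Finset.mem_filter.mp hSmem).2
  have hSmax : ∀ S' : Finset (Fin (K+1)), S'.Nonempty → f S' ≤ f S := by
    intro S' hS'
    exact le_trans (hS₀max S' (by simp [hS'])) hSge
  -- S is downward closed
  have hdc : ∀ i j : Fin (K+1), i ≤ j → j ∈ S → i ∈ S := by
    intro i j hij hjS
    by_contra hiS
    have h1 := exchange' l α hl hα hSne hSmax (hmono hij) hjS hiS
    have h2 := hSmax (insert i S) (Finset.insert_nonempty _ _)
    have hins : (insert i S) ∈ (univ : Finset (Finset (Fin (K+1)))).filter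
        (fun T => T.Nonempty ∧ f S₀ ≤ f T) := by
      simp only [Finset.mem_filter, Finset.mem_univ, true_and]
      exact ⟨Finset.insert_nonempty _ _, le_trans hSge h1⟩
    have := hScard _ hins
    rw [Finset.card_insert_of_notMem hiS] at this
    omega
  -- S is a prefix
  set m := S.max' hSne with hm
  refine ⟨(m : ℕ) + 1, le_add_self, by omega, ?_⟩
  have hSeq : S = univ.filter (fun i : Fin (K+1) => (i : ℕ) < (m : ℕ) + 1) := by
    ext i
    simp only [Finset.mem_filter, Finset.mem_univ, true_and]
    constructor
    · intro hi
      have := Finset.le_max' S i hi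
      omega
    · intro hi
      have him : i ≤ m := by
        rw [Fin.le_def]; omega
      exact hdc i m him (S.max'_mem hSne)
  intro S' hS'
  have := hSmax S' hS'
  rw [hf] at this
  rw [← hSeq]; exact this
end

section
/- Let l₀, l_j, l_K be positive reals and α₀, α_j, α_K reals with 0 < α₀ ≤ α_j ≤ α_K. Then it is impossible that both (l₀ + l_K)²/(α₀l₀ + α_Kl_K) > (l₀ + l_j + l_K)²/(α₀l₀ + α_jl_j + α_Kl_K) and (l₀ + l_K)²/(α₀l₀ + α_Kl_K) > l₀/α₀ hold simultaneously; i.e. at least one of (l₀ + l_j + l_K)²/(α₀l₀ + α_jl_j + α_Kl_K) ≥ (l₀ + l_K)²/(α₀l₀ + α_Kl_K) or l₀/α₀ ≥ (l₀ + l_K)²/(α₀l₀ + α_Kl_K) holds. -/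
/-- For positive `l₀, l_j, l_K` and `0 < α₀ ≤ α_j ≤ α_K`, it cannot happen
simultaneously that `(l₀ + l_K)²/(α₀l₀ + α_Kl_K)` strictly exceeds both
`(l₀ + l_j + l_K)²/(α₀l₀ + α_jl_j + α_Kl_K)` and `l₀/α₀`; equivalently, at least one of
the two displayed inequalities holds. -/
theorem no_middle_drop
    (l₀ lj lK α₀ αj αK : ℝ)
    (hl₀ : 0 < l₀) (hlj : 0 < lj) (hlK : 0 < lK)
    (hα₀ : 0 < α₀) (hα₀j : α₀ ≤ αj) (hαjK : αj ≤ αK) :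
    (l₀ + lj + lK) ^ 2 / (α₀ * l₀ + αj * lj + αK * lK) ≥
        (l₀ + lK) ^ 2 / (α₀ * l₀ + αK * lK) ∨
      l₀ / α₀ ≥ (l₀ + lK) ^ 2 / (α₀ * l₀ + αK * lK) := by
  have hαj : 0 < αj := lt_of_lt_of_le hα₀ hα₀j
  have hαK : 0 < αK := lt_of_lt_of_le hαj hαjK
  have hB : 0 < α₀ * l₀ + αK * lK := by positivity
  have hA : 0 < α₀ * l₀ + αj * lj + αK * lK := by positivity
  by_contra h
  push_neg at h
  obtain ⟨h1, h2⟩ := h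
  rw [div_lt_div_iff₀ hA hB] at h1
  rw [div_lt_div_iff₀ hα₀ hB] at h2
  have key1 : (α₀ * l₀ + αK * lK) * (2 * (l₀ + lK) + lj) < αj * (l₀ + lK) ^ 2 := by
    nlinarith [mul_pos hlj hlK, mul_pos hl₀ hlj]
  have key2 : 2 * (α₀ * l₀ + αK * lK) < αj * (l₀ + lK) := by
    nlinarith [mul_pos hB hlj, mul_pos hl₀ hlK]
  have hA' : αj * l₀ > 2 * (α₀ * l₀) + αj * lK := by
    nlinarith [mul_nonneg (sub_nonneg.2 hαjK) hlK.le]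
  have hB' : αj * l₀ < 2 * (α₀ * l₀) + α₀ * lK := by
    nlinarith [mul_nonneg (mul_nonneg (sub_nonneg.2 hαjK) hlK.le) hl₀.le, mul_pos hl₀ hlK]
  nlinarith [mul_nonneg (sub_nonneg.2 hα₀j) hlK.le]
end

section
/- Fix an integer K ≥ 1, reals nⁱ > 0 and n₁ⁱ with 0 < n₁ⁱ < nⁱ, γⁱ = n₁ⁱ/nⁱ, and bounds xⁱ with 0 < xⁱ ≤ min(n₁ⁱ, nⁱ − n₁ⁱ) for every i. Set αᵢ = (1 − γⁱ)(1 − xⁱ/nⁱ) for each i, and let σ be a permutation of {1,…,K} ordering the αᵢ ascendingly, i.e. α_{σ(1)} ≤ α_{σ(2)} ≤ … ≤ α_{σ(K)}. Then the supremum of T_l(z) = (Σᵢ γⁱzⁱ)²/D(z) over {z : 0 ≤ zⁱ ≤ xⁱ for all i, D(z) > 0} equals the maximum over r = 1,…,K of (Σ_{j=1}^{r} γ^{σ(j)} x^{σ(j)})² / (Σ_{j=1}^{r} γ^{σ(j)}(1−γ^{σ(j)}) x^{σ(j)} (1 − x^{σ(j)}/n^{σ(j)})). -/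
open Finset

-- Key lemma in ℕ-indexed form
theorem lemB (K : ℕ) (hK : 1 ≤ K) (u a w : ℕ → ℝ)
    (hu : ∀ i < K, 0 < u i) (ha : ∀ i < K, 0 < a i)
    (hmono : ∀ i j : ℕ, i ≤ j → j < K → a i ≤ a j)
    (hw0 : ∀ i < K, 0 ≤ w i) (hwu : ∀ i < K, w i ≤ u i)
    (hV : 0 < ∑ i ∈ range K, w i * a i) :
    (∑ i ∈ range K, w i) ^ 2 / (∑ i ∈ range K, w i * a i) ≤
      (Finset.Icc 1 K).sup' (Finset.nonempty_Icc.mpr hK)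
        (fun r => (∑ i ∈ range r, u i) ^ 2 / (∑ i ∈ range r, u i * a i)) := by
  set U : ℕ → ℝ := fun r => ∑ i ∈ range r, u i with hU
  set Dp : ℕ → ℝ := fun r => ∑ i ∈ range r, u i * a i with hDp
  set W : ℝ := ∑ i ∈ range K, w i with hW
  set V : ℝ := ∑ i ∈ range K, w i * a i with hVdef
  set M : ℝ := (Finset.Icc 1 K).sup' (Finset.nonempty_Icc.mpr hK)
        (fun r => (U r) ^ 2 / (Dp r)) with hM
  -- W > 0
  have hWpos : 0 < W := by
    obtain ⟨i, hi, hne⟩ := Finset.exists_ne_zero_of_sum_ne_zero hV.ne'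
    have hiK : i < K := Finset.mem_range.mp hi
    have hwi : 0 < w i := by
      rcases lt_or_eq_of_le (hw0 i hiK) with h | h
      · exact h
      · exfalso; apply hne; rw [← h]; ring
    calc (0:ℝ) < w i := hwi
      _ ≤ W := Finset.single_le_sum (fun j hj => hw0 j (Finset.mem_range.mp hj)) hi
  have hWK : W ≤ U K :=
    Finset.sum_le_sum (fun j hj => hwu j (Finset.mem_range.mp hj))
  -- minimal r with W ≤ U r
  have hex : ∃ r, W ≤ U r := ⟨K, hWK⟩
  classical
  set r : ℕ := Nat.find hex with hrdef
  have hr : W ≤ U r := Nat.find_spec hex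
  have hrmin : ∀ m < r, U m < W := fun m hm => lt_of_not_ge (Nat.find_min hex hm)
  have hrK : r ≤ K := Nat.find_le hWK
  have hr1 : 1 ≤ r := by
    by_contra h
    have h0 : r = 0 := by omega
    have hU0 : U 0 = 0 := by simp [hU]
    rw [h0, hU0] at hr; linarith
  set p : ℕ := r - 1 with hpdef
  have hpr : p + 1 = r := Nat.succ_pred_eq_of_pos hr1
  have hpK : p < K := by omega
  have hUpW : U p < W := hrmin p (by omega)
  have hUstep : U r = U p + u p := by rw [← hpr]; simp [hU, Finset.sum_range_succ]
  have hDstep : Dp r = Dp p + u p * a p := by rw [← hpr]; simp [hDp, Finset.sum_range_succ]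
  -- key: V ≥ Dp p + a p * (W - U p)
  have hkey : Dp p + a p * (W - U p) ≤ V := by
    have hsplit : V - a p * W = ∑ i ∈ range K, w i * (a i - a p) := by
      rw [hVdef, hW, Finset.mul_sum, ← Finset.sum_sub_distrib]
      exact Finset.sum_congr rfl (fun i _ => by ring)
    have hsplit2 : Dp p - a p * U p = ∑ i ∈ range p, u i * (a i - a p) := by
      rw [hDp, hU]; simp only [Finset.mul_sum, ← Finset.sum_sub_distrib]
      exact Finset.sum_congr rfl (fun i _ => by ring)
    have hKsplit : ∑ i ∈ range K, w i * (a i - a p)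
        = ∑ i ∈ range p, w i * (a i - a p) + ∑ i ∈ Finset.Ico p K, w i * (a i - a p) := by
      rw [Finset.range_eq_Ico, ← Finset.sum_Ico_consecutive _ (Nat.zero_le p) (le_of_lt hpK)]
      rw [Finset.range_eq_Ico]
    have h1 : ∑ i ∈ range p, u i * (a i - a p) ≤ ∑ i ∈ range p, w i * (a i - a p) := by
      apply Finset.sum_le_sum
      intro i hi
      have hiK : i < K := lt_trans (Finset.mem_range.mp hi) hpK
      have hai : a i - a p ≤ 0 := by
        have := hmono i p (le_of_lt (Finset.mem_range.mp hi)) hpK; linarith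
      nlinarith [hwu i hiK]
    have h2 : (0:ℝ) ≤ ∑ i ∈ Finset.Ico p K, w i * (a i - a p) := by
      apply Finset.sum_nonneg
      intro i hi
      obtain ⟨hpi, hiK⟩ := Finset.mem_Ico.mp hi
      have hai : 0 ≤ a i - a p := by have := hmono p i hpi hiK; linarith
      exact mul_nonneg (hw0 i hiK) hai
    nlinarith [hsplit, hsplit2, hKsplit, h1, h2]
  have hLpos : 0 < Dp p + a p * (W - U p) := by
    have hDpnn : 0 ≤ Dp p := Finset.sum_nonneg fun i hi => by
      have hiK : i < K := lt_trans (Finset.mem_range.mp hi) hpK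
      exact mul_nonneg (le_of_lt (hu i hiK)) (le_of_lt (ha i hiK))
    nlinarith [ha p hpK]
  -- endpoint bounds
  have hMr : (U r) ^ 2 / Dp r ≤ M := by
    rw [hM]
    exact Finset.le_sup' (fun r => (U r) ^ 2 / (Dp r)) (by simp [Finset.mem_Icc]; omega)
  have hDrpos : 0 < Dp r := by
    rw [hDstep]
    have hDpnn : 0 ≤ Dp p := Finset.sum_nonneg fun i hi => by
      have hiK : i < K := lt_trans (Finset.mem_range.mp hi) hpK
      exact mul_nonneg (le_of_lt (hu i hiK)) (le_of_lt (ha i hiK))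
    nlinarith [hu p hpK, ha p hpK]
  have e2 : (U r) ^ 2 ≤ M * Dp r := by
    rw [div_le_iff₀ hDrpos] at hMr; linarith
  have e1 : (U p) ^ 2 ≤ M * Dp p := by
    rcases Nat.eq_zero_or_pos p with h | h
    · simp [h, hU, hDp]
    · have hDppos : 0 < Dp p := by
        apply Finset.sum_pos
        · intro i hi
          have hiK : i < K := lt_trans (Finset.mem_range.mp hi) hpK
          exact mul_pos (hu i hiK) (ha i hiK)
        · exact Finset.nonempty_range_iff.mpr (by omega)
      have hMp : (U p) ^ 2 / Dp p ≤ M := by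
        rw [hM]
        exact Finset.le_sup' (fun r => (U r) ^ 2 / (Dp r)) (by simp [Finset.mem_Icc]; omega)
      rw [div_le_iff₀ hDppos] at hMp; linarith
  -- the convexity step
  have hconv : W ^ 2 ≤ M * (Dp p + a p * (W - U p)) := by
    have hupos : 0 < u p := hu p hpK
    have hWUr : W ≤ U p + u p := by rw [← hUstep]; exact hr
    have e2' : (U p + u p) ^ 2 ≤ M * (Dp p + u p * a p) := by
      rw [← hUstep, ← hDstep]; exact e2
    have hWU : U p ≤ W := le_of_lt hUpW
    nlinarith [mul_le_mul_of_nonneg_right e1 (show (0:ℝ) ≤ U p + u p - W by linarith),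
      mul_le_mul_of_nonneg_right e2' (show (0:ℝ) ≤ W - U p by linarith),
      mul_nonneg (mul_nonneg (show (0:ℝ) ≤ W - U p by linarith)
        (show (0:ℝ) ≤ U p + u p - W by linarith)) hupos.le,
      hupos, mul_pos hupos (ha p hpK)]
  have step1 : W ^ 2 / V ≤ W ^ 2 / (Dp p + a p * (W - U p)) :=
    div_le_div_of_nonneg_left (sq_nonneg W) hLpos hkey
  have step2 : W ^ 2 / (Dp p + a p * (W - U p)) ≤ M := by
    rw [div_le_iff₀ hLpos]; linarith
  linarith

theorem lemC {K : ℕ} (r : ℕ) (hr : r ≤ K) (f : Fin K → ℝ) (f' : ℕ → ℝ)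
    (hf : ∀ (i : ℕ) (h : i < K), f' i = f ⟨i, h⟩) :
    ∑ j ∈ Finset.univ.filter (fun j : Fin K => (j : ℕ) < r), f j = ∑ i ∈ range r, f' i := by
  induction r with
  | zero => simp
  | succ m ih =>
    have hm : m < K := by omega
    have hset : Finset.univ.filter (fun j : Fin K => (j : ℕ) < m + 1)
        = insert (⟨m, hm⟩ : Fin K) (Finset.univ.filter (fun j : Fin K => (j : ℕ) < m)) := by
      ext j; simp [Fin.ext_iff]; omega
    rw [hset, Finset.sum_insert (by simp), Finset.sum_range_succ, ih (by omega), hf m hm]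
    ring

theorem Tl_sup_eq_prefix_max
    (K : ℕ) (hK : 1 ≤ K)
    (n n1 : Fin K → ℝ)
    (hn : ∀ i, 0 < n i)
    (hn1 : ∀ i, 0 < n1 i ∧ n1 i < n i)
    (γ : Fin K → ℝ) (hγ : γ = fun i => n1 i / n i)
    (D : (Fin K → ℝ) → ℝ)
    (hD : D = fun z => ∑ i, γ i * (1 - γ i) * z i * (1 - z i / n i))
    (Tl : (Fin K → ℝ) → ℝ) (hTl : Tl = fun z => (∑ i, γ i * z i) ^ 2 / D z)
    (x : Fin K → ℝ)
    (hx : ∀ i, 0 < x i ∧ x i ≤ min (n1 i) (n i - n1 i))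
    (α : Fin K → ℝ) (hα : α = fun i => (1 - γ i) * (1 - x i / n i))
    (σ : Equiv.Perm (Fin K))
    (hσ : ∀ i j : Fin K, i ≤ j → α (σ i) ≤ α (σ j))
    (H : ℕ → ℝ)
    (hH : H = fun r =>
      (∑ j ∈ Finset.univ.filter (fun j : Fin K => (j : ℕ) < r), γ (σ j) * x (σ j)) ^ 2 /
      (∑ j ∈ Finset.univ.filter (fun j : Fin K => (j : ℕ) < r),
        γ (σ j) * (1 - γ (σ j)) * x (σ j) * (1 - x (σ j) / n (σ j)))) :
    sSup {t : ℝ | ∃ z : Fin K → ℝ,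
        (∀ i, 0 ≤ z i ∧ z i ≤ x i) ∧ 0 < D z ∧ t = Tl z} =
      (Finset.Icc 1 K).sup' (Finset.nonempty_Icc.mpr hK) H := by
  classical
  -- basic positivity facts
  have hγpos : ∀ i, 0 < γ i := by
    intro i; rw [hγ]; exact div_pos (hn1 i).1 (hn i)
  have hγlt1 : ∀ i, γ i < 1 := by
    intro i; rw [hγ]; exact (div_lt_one (hn i)).mpr (hn1 i).2
  have hxn : ∀ i, x i < n i := by
    intro i
    have h1 : x i ≤ n i - n1 i := le_trans (hx i).2 (min_le_right _ _)
    have := (hn1 i).1; linarith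
  have hxdiv : ∀ i, x i / n i < 1 := fun i => (div_lt_one (hn i)).mpr (hxn i)
  have hαpos : ∀ i, 0 < α i := by
    intro i; rw [hα]
    have := hγlt1 i; have := hxdiv i
    exact mul_pos (by linarith) (by linarith)
  -- ℕ-indexed data
  set u' : ℕ → ℝ := fun i => if h : i < K then γ (σ ⟨i, h⟩) * x (σ ⟨i, h⟩) else 1 with hu'def
  set a' : ℕ → ℝ := fun i => if h : i < K then α (σ ⟨i, h⟩) else 1 with ha'def
  set M : ℝ := (Finset.Icc 1 K).sup' (Finset.nonempty_Icc.mpr hK) H with hMdef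
  set S : Set ℝ := {t : ℝ | ∃ z : Fin K → ℝ,
      (∀ i, 0 ≤ z i ∧ z i ≤ x i) ∧ 0 < D z ∧ t = Tl z} with hSdef
  -- H r agrees with ℕ-indexed prefix ratios for r ≤ K
  have hHr : ∀ r ∈ Finset.Icc 1 K,
      (∑ i ∈ range r, u' i) ^ 2 / (∑ i ∈ range r, u' i * a' i) = H r := by
    intro r hr
    obtain ⟨hr1, hrK⟩ := Finset.mem_Icc.mp hr
    have hnum := lemC r hrK (fun j => γ (σ j) * x (σ j)) u'
      (fun i h => by simp [hu'def, dif_pos h])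
    have hden := lemC r hrK
      (fun j => γ (σ j) * (1 - γ (σ j)) * x (σ j) * (1 - x (σ j) / n (σ j)))
      (fun i => u' i * a' i)
      (fun i h => by simp only [hu'def, ha'def, dif_pos h]; rw [hα]; ring)
    rw [hH]; rw [← hnum, ← hden]
  have hsup_eq : (Finset.Icc 1 K).sup' (Finset.nonempty_Icc.mpr hK)
      (fun r => (∑ i ∈ range r, u' i) ^ 2 / (∑ i ∈ range r, u' i * a' i)) = M := by
    rw [hMdef]
    exact Finset.sup'_congr _ rfl hHr
  -- upper bound
  have hub : ∀ t ∈ S, t ≤ M := by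
    rintro t ⟨z, hz, hDz, ht⟩
    set w' : ℕ → ℝ := fun i => if h : i < K then γ (σ ⟨i, h⟩) * z (σ ⟨i, h⟩) else 0 with hw'def
    have hsum_w : ∑ i ∈ range K, w' i = ∑ i, γ i * z i := by
      rw [← Fin.sum_univ_eq_sum_range (fun i => w' i) K]
      rw [← Equiv.sum_comp σ (fun i => γ i * z i)]
      exact Finset.sum_congr rfl (fun j _ => by simp [hw'def, dif_pos j.isLt])
    have hsum_wa : ∑ i ∈ range K, w' i * a' i = ∑ i, γ i * z i * α i := by
      rw [← Fin.sum_univ_eq_sum_range (fun i => w' i * a' i) K]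
      rw [← Equiv.sum_comp σ (fun i => γ i * z i * α i)]
      exact Finset.sum_congr rfl (fun j _ => by simp [hw'def, ha'def, dif_pos j.isLt])
    have hDge : ∑ i, γ i * z i * α i ≤ D z := by
      rw [hD]
      apply Finset.sum_le_sum
      intro i _
      have h1 : z i / n i ≤ x i / n i :=
        div_le_div_of_nonneg_right (hz i).2 (hn i).le
      have h2 : (0:ℝ) ≤ γ i * (1 - γ i) * z i :=
        mul_nonneg (mul_nonneg (hγpos i).le (by have := hγlt1 i; linarith)) (hz i).1
      have : γ i * z i * α i = (γ i * (1 - γ i) * z i) * (1 - x i / n i) := by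
        rw [hα]; ring
      rw [this]
      have : γ i * (1 - γ i) * z i * (1 - z i / n i)
          = (γ i * (1 - γ i) * z i) * (1 - z i / n i) := by ring
      rw [this]
      apply mul_le_mul_of_nonneg_left (by linarith) h2
    have hVpos : 0 < ∑ i, γ i * z i * α i := by
      rw [hD] at hDz
      obtain ⟨i, _, hne⟩ := Finset.exists_ne_zero_of_sum_ne_zero hDz.ne'
      have hzi : 0 < z i := by
        rcases lt_or_eq_of_le (hz i).1 with h | h
        · exact h
        · exfalso; apply hne; rw [← h]; ring
      apply Finset.sum_pos'
      · intro j _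
        exact mul_nonneg (mul_nonneg (hγpos j).le (hz j).1) (hαpos j).le
      · exact ⟨i, Finset.mem_univ i,
          mul_pos (mul_pos (hγpos i) hzi) (hαpos i)⟩
    have hB := lemB K hK u' a' w'
      (fun i h => by
        simp only [hu'def, dif_pos h]
        exact mul_pos (hγpos _) (hx _).1)
      (fun i h => by simp only [ha'def, dif_pos h]; exact hαpos _)
      (fun i j hij hjK => by
        have hiK : i < K := lt_of_le_of_lt hij hjK
        simp only [ha'def, dif_pos hiK, dif_pos hjK]
        exact hσ _ _ (by simpa [Fin.mk_le_mk] using hij))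
      (fun i h => by
        simp only [hw'def, dif_pos h]
        exact mul_nonneg (hγpos _).le (hz _).1)
      (fun i h => by
        simp only [hw'def, hu'def, dif_pos h]
        exact mul_le_mul_of_nonneg_left (hz _).2 (hγpos _).le)
      (by rw [hsum_wa]; exact hVpos)
    rw [hsum_w, hsum_wa, hsup_eq] at hB
    have hstep : (∑ i, γ i * z i) ^ 2 / D z ≤ (∑ i, γ i * z i) ^ 2 / (∑ i, γ i * z i * α i) :=
      div_le_div_of_nonneg_left (sq_nonneg _) hVpos hDge
    rw [ht, hTl]
    exact le_trans hstep hB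
  -- membership of prefix values
  have hmem : ∀ r ∈ Finset.Icc 1 K, H r ∈ S := by
    intro r hr
    obtain ⟨hr1, hrK⟩ := Finset.mem_Icc.mp hr
    set zr : Fin K → ℝ := fun i => if ((σ.symm i : Fin K) : ℕ) < r then x i else 0 with hzr
    have hz : ∀ i, 0 ≤ zr i ∧ zr i ≤ x i := by
      intro i
      simp only [hzr]
      split
      · exact ⟨(hx i).1.le, le_refl _⟩
      · exact ⟨le_refl _, (hx i).1.le⟩
    have hnum : ∑ i, γ i * zr i
        = ∑ j ∈ Finset.univ.filter (fun j : Fin K => (j : ℕ) < r), γ (σ j) * x (σ j) := by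
      rw [Finset.sum_filter]
      rw [← Equiv.sum_comp σ (fun i => γ i * zr i)]
      apply Finset.sum_congr rfl
      intro j _
      simp only [hzr, Equiv.symm_apply_apply]
      split <;> ring
    have hden : D zr
        = ∑ j ∈ Finset.univ.filter (fun j : Fin K => (j : ℕ) < r),
            γ (σ j) * (1 - γ (σ j)) * x (σ j) * (1 - x (σ j) / n (σ j)) := by
      simp only [hD]
      rw [Finset.sum_filter]
      rw [← Equiv.sum_comp σ (fun i => γ i * (1 - γ i) * zr i * (1 - zr i / n i))]
      apply Finset.sum_congr rfl
      intro j _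
      simp only [hzr, Equiv.symm_apply_apply]
      split_ifs with h
      · ring
      · simp
    have hDpos : 0 < D zr := by
      rw [hden]
      apply Finset.sum_pos
      · intro j hj
        exact mul_pos (mul_pos (mul_pos (hγpos _)
          (by have := hγlt1 (σ j); linarith)) (hx _).1)
          (by have := hxdiv (σ j); linarith)
      · refine ⟨⟨0, by omega⟩, ?_⟩
        simp [Finset.mem_filter]
        omega
    refine ⟨zr, hz, hDpos, ?_⟩
    simp only [hTl, hH]
    rw [hnum, hden]
  -- conclude
  have h1mem : (1 : ℕ) ∈ Finset.Icc 1 K := Finset.mem_Icc.mpr ⟨le_refl _, hK⟩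
  have hne : S.Nonempty := ⟨H 1, hmem 1 h1mem⟩
  have hbdd : BddAbove S := ⟨M, fun t ht => hub t ht⟩
  apply le_antisymm
  · exact csSup_le hne hub
  · exact Finset.sup'_le _ H (fun r hr => le_csSup hbdd (hmem r hr))
end

section
/- Fix an integer K ≥ 1, reals nⁱ > 0 and n₁ⁱ with 0 < n₁ⁱ < nⁱ, γⁱ = n₁ⁱ/nⁱ, and bounds xⁱ with 0 < xⁱ ≤ min(n₁ⁱ, nⁱ − n₁ⁱ) for every i. Set αᵢ = γⁱ(1 − xⁱ/nⁱ) for each i, and let σ be a permutation of {1,…,K} ordering the αᵢ ascendingly, i.e. α_{σ(1)} ≤ α_{σ(2)} ≤ … ≤ α_{σ(K)}. Then the supremum of T_r(z) = (Σᵢ (1−γⁱ)zⁱ)²/D(z) over {z : 0 ≤ zⁱ ≤ xⁱ for all i, D(z) > 0} equals the maximum over r = 1,…,K of (Σ_{j=1}^{r} (1−γ^{σ(j)}) x^{σ(j)})² / (Σ_{j=1}^{r} γ^{σ(j)}(1−γ^{σ(j)}) x^{σ(j)} (1 − x^{σ(j)}/n^{σ(j)})). -/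
open Finset

lemma prefix_key (K : ℕ) (a W : Fin K → ℝ)
    (ha : ∀ j, 0 < a j) (hW : ∀ j, 0 < W j)
    (hmono : ∀ i j : Fin K, i ≤ j → a i ≤ a j)
    (M : ℝ) (hM0 : 0 ≤ M)
    (hM : ∀ r, 1 ≤ r → r ≤ K →
      (∑ j ∈ Finset.univ.filter (fun j : Fin K => (j : ℕ) < r), W j) ^ 2 ≤
        M * ∑ j ∈ Finset.univ.filter (fun j : Fin K => (j : ℕ) < r), a j * W j)
    (w : Fin K → ℝ) (hw : ∀ j, 0 ≤ w j ∧ w j ≤ W j) :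
    (∑ j, w j) ^ 2 ≤ M * ∑ j, a j * w j := by
  set S : ℕ → ℝ := fun r => ∑ j ∈ Finset.univ.filter (fun j : Fin K => (j : ℕ) < r), W j with hS
  set Dn : ℕ → ℝ := fun r => ∑ j ∈ Finset.univ.filter (fun j : Fin K => (j : ℕ) < r), a j * W j with hDn
  set s : ℝ := ∑ j, w j with hs
  have hs0 : 0 ≤ s := Finset.sum_nonneg (fun j _ => (hw j).1)
  have haw0 : 0 ≤ ∑ j, a j * w j :=
    Finset.sum_nonneg (fun j _ => mul_nonneg (ha j).le (hw j).1)
  have hPK : s ≤ S K := by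
    have : Finset.univ.filter (fun j : Fin K => (j : ℕ) < K) = Finset.univ := by
      ext j; simp [j.isLt]
    rw [hS]
    simp only [this]
    exact Finset.sum_le_sum (fun j _ => (hw j).2)
  classical
  have hex : ∃ r, s ≤ S r := ⟨K, hPK⟩
  set r := Nat.find hex with hrdef
  have hr : s ≤ S r := Nat.find_spec hex
  have hrK : r ≤ K := Nat.find_le hPK
  rcases Nat.eq_zero_or_pos r with h0 | h1
  · -- r = 0 : s ≤ S 0 = 0, so s = 0
    have : S 0 = 0 := by
      rw [hS]; simp
    have hs' : s = 0 := le_antisymm (by rw [h0] at hr; rwa [this] at hr) hs0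
    rw [hs']
    simpa using mul_nonneg hM0 haw0
  · set p := r - 1 with hp
    have hpr : p < r := by omega
    have hpK : p < K := by omega
    set e : Fin K := ⟨p, hpK⟩ with he
    have hSp : S p < s := by
      have := Nat.find_min hex hpr
      push_neg at this
      exact this
    -- split sums at e
    have hfil : Finset.univ.filter (fun j : Fin K => (j : ℕ) < r)
        = insert e (Finset.univ.filter (fun j : Fin K => (j : ℕ) < p)) := by
      ext j
      simp only [Finset.mem_insert, Finset.mem_filter, Finset.mem_univ, true_and]
      constructor
      · intro hj
        rcases Nat.lt_or_ge (j : ℕ) p with h | h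
        · exact Or.inr h
        · left; apply Fin.ext; simp [he]; omega
      · rintro (rfl | hj)
        · simp [he]; omega
        · omega
    have hnotmem : e ∉ Finset.univ.filter (fun j : Fin K => (j : ℕ) < p) := by
      simp [he]
    have hSr : S r = W e + S p := by
      rw [hS]; simp only [hfil]; rw [Finset.sum_insert hnotmem]
    have hDr : Dn r = a e * W e + Dn p := by
      rw [hDn]; simp only [hfil]; rw [Finset.sum_insert hnotmem]
    have hSp2 : (S p) ^ 2 ≤ M * Dn p := by
      rcases Nat.eq_zero_or_pos p with h | h
      · rw [hS, hDn]; simp [h]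
      · exact hM p h (by omega)
    have hSr2 : (S r) ^ 2 ≤ M * Dn r := hM r h1 hrK
    -- convexity: s² ≤ M (Dn p + a e (s − S p))
    have hWe := hW e
    have hconv : s ^ 2 ≤ M * (Dn p + a e * (s - S p)) := by
      have hmul : W e * s ^ 2 ≤ W e * (M * (Dn p + a e * (s - S p))) := by
        have h2 : (W e + S p) ^ 2 ≤ M * (a e * W e + Dn p) := by
          rw [← hSr, ← hDr]; exact hSr2
        nlinarith [mul_le_mul_of_nonneg_left hSp2 (by linarith [hr, hSr] : (0:ℝ) ≤ W e - (s - S p)),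
          mul_le_mul_of_nonneg_left h2 (by linarith : (0:ℝ) ≤ s - S p),
          mul_nonneg (mul_nonneg (by linarith : (0:ℝ) ≤ s - S p) hWe.le)
            (by linarith [hr, hSr] : (0:ℝ) ≤ W e - (s - S p))]
      exact le_of_mul_le_mul_left hmul hWe
    -- lower bound on ∑ a w
    have hlow : Dn p + a e * (s - S p) ≤ ∑ j, a j * w j := by
      have hterm : ∀ j : Fin K,
          (if (j : ℕ) < p then (a j - a e) * W j else 0) ≤ (a j - a e) * w j := by
        intro j
        split_ifs with hj
        · have hje : j ≤ e := by
            apply Fin.le_def.mpr; simp [he]; omega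
          have : a j ≤ a e := hmono j e hje
          have h1 : a j - a e ≤ 0 := by linarith
          nlinarith [(hw j).2]
        · have hej : e ≤ j := by
            apply Fin.le_def.mpr; simp [he]; omega
          have : a e ≤ a j := hmono e j hej
          nlinarith [(hw j).1]
      have hsum := Finset.sum_le_sum (fun j (_ : j ∈ Finset.univ) => hterm j)
      rw [Finset.sum_ite, Finset.sum_const_zero, add_zero] at hsum
      have hleft : ∑ j ∈ Finset.univ.filter (fun j : Fin K => (j : ℕ) < p), (a j - a e) * W j
          = Dn p - a e * S p := by
        simp only [hDn, hS, Finset.mul_sum, ← Finset.sum_sub_distrib]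
        exact Finset.sum_congr rfl (fun j _ => by ring)
      have hright : ∑ j, (a j - a e) * w j = (∑ j, a j * w j) - a e * s := by
        simp only [hs, Finset.mul_sum, ← Finset.sum_sub_distrib]
        exact Finset.sum_congr rfl (fun j _ => by ring)
      rw [hleft, hright] at hsum
      linarith
    calc s ^ 2 ≤ M * (Dn p + a e * (s - S p)) := hconv
      _ ≤ M * ∑ j, a j * w j := mul_le_mul_of_nonneg_left hlow hM0

/-- Sorting the coefficients `α i = γ i (1 − x i / n i)` ascendingly by a
permutation `σ`, the supremum of `T_r` over `{z : 0 ≤ z i ≤ x i, D z > 0}` equals the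
maximum over prefixes `r = 1,…,K` of the corresponding prefix ratio. -/
theorem Tr_sup_eq_prefix_max
    (K : ℕ) (hK : 1 ≤ K)
    (n n1 : Fin K → ℝ)
    (hn : ∀ i, 0 < n i)
    (hn1 : ∀ i, 0 < n1 i ∧ n1 i < n i)
    (γ : Fin K → ℝ) (hγ : γ = fun i => n1 i / n i)
    (D : (Fin K → ℝ) → ℝ)
    (hD : D = fun z => ∑ i, γ i * (1 - γ i) * z i * (1 - z i / n i))
    (Tr : (Fin K → ℝ) → ℝ) (hTr : Tr = fun z => (∑ i, (1 - γ i) * z i) ^ 2 / D z)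
    (x : Fin K → ℝ)
    (hx : ∀ i, 0 < x i ∧ x i ≤ min (n1 i) (n i - n1 i))
    (α : Fin K → ℝ) (hα : α = fun i => γ i * (1 - x i / n i))
    (σ : Equiv.Perm (Fin K))
    (hσ : ∀ i j : Fin K, i ≤ j → α (σ i) ≤ α (σ j))
    (H : ℕ → ℝ)
    (hH : H = fun r =>
      (∑ j ∈ Finset.univ.filter (fun j : Fin K => (j : ℕ) < r),
        (1 - γ (σ j)) * x (σ j)) ^ 2 /
      (∑ j ∈ Finset.univ.filter (fun j : Fin K => (j : ℕ) < r),
        γ (σ j) * (1 - γ (σ j)) * x (σ j) * (1 - x (σ j) / n (σ j)))) :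
    sSup {t : ℝ | ∃ z : Fin K → ℝ,
        (∀ i, 0 ≤ z i ∧ z i ≤ x i) ∧ 0 < D z ∧ t = Tr z} =
      (Finset.Icc 1 K).sup' (Finset.nonempty_Icc.mpr hK) H := by
  classical
  -- basic positivity facts
  have hγ01 : ∀ i, 0 < γ i ∧ γ i < 1 := by
    intro i
    rw [hγ]
    exact ⟨div_pos (hn1 i).1 (hn i), (div_lt_one (hn i)).mpr (hn1 i).2⟩
  have hxn : ∀ i, 0 < 1 - x i / n i := by
    intro i
    have hxi := (hx i).2
    have h1 : x i < n i := by
      have := le_min_iff.mp hxi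
      have := (hn1 i).1
      linarith [this, (le_min_iff.mp hxi).2]
    have : x i / n i < 1 := (div_lt_one (hn i)).mpr h1
    linarith
  set a : Fin K → ℝ := fun j => α (σ j) with ha_def
  set W : Fin K → ℝ := fun j => (1 - γ (σ j)) * x (σ j) with hW_def
  have hapos : ∀ j, 0 < a j := by
    intro j; rw [ha_def]; dsimp only; rw [hα]
    exact mul_pos (hγ01 (σ j)).1 (hxn (σ j))
  have hWpos : ∀ j, 0 < W j := by
    intro j; rw [hW_def]; dsimp only
    exact mul_pos (by linarith [(hγ01 (σ j)).2]) (hx (σ j)).1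
  have hmono : ∀ i j : Fin K, i ≤ j → a i ≤ a j := fun i j h => hσ i j h
  -- H r in terms of a, W
  have hDen : ∀ r : ℕ,
      (∑ j ∈ Finset.univ.filter (fun j : Fin K => (j : ℕ) < r),
        γ (σ j) * (1 - γ (σ j)) * x (σ j) * (1 - x (σ j) / n (σ j)))
      = ∑ j ∈ Finset.univ.filter (fun j : Fin K => (j : ℕ) < r), a j * W j := by
    intro r
    refine Finset.sum_congr rfl (fun j _ => ?_)
    rw [ha_def, hW_def]; dsimp only; rw [hα]; ring
  have hHeq : ∀ r : ℕ, H r =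
      (∑ j ∈ Finset.univ.filter (fun j : Fin K => (j : ℕ) < r), W j) ^ 2 /
      (∑ j ∈ Finset.univ.filter (fun j : Fin K => (j : ℕ) < r), a j * W j) := by
    intro r
    rw [hH]; dsimp only; rw [hDen r, hW_def]
  have hDenpos : ∀ r : ℕ, 1 ≤ r →
      0 < ∑ j ∈ Finset.univ.filter (fun j : Fin K => (j : ℕ) < r), a j * W j := by
    intro r hr
    apply Finset.sum_pos
    · intro j _; exact mul_pos (hapos j) (hWpos j)
    · refine ⟨⟨0, by omega⟩, ?_⟩
      simp; omega
  set M : ℝ := (Finset.Icc 1 K).sup' (Finset.nonempty_Icc.mpr hK) H with hM_def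
  have hHM : ∀ r ∈ Finset.Icc 1 K, H r ≤ M :=
    fun r hr => Finset.le_sup' H hr
  have hM0 : 0 ≤ M := by
    refine le_trans ?_ (hHM 1 (by simp [hK]))
    rw [hHeq 1]
    exact div_nonneg (sq_nonneg _) (hDenpos 1 le_rfl).le
  have hMr : ∀ r, 1 ≤ r → r ≤ K →
      (∑ j ∈ Finset.univ.filter (fun j : Fin K => (j : ℕ) < r), W j) ^ 2 ≤
        M * ∑ j ∈ Finset.univ.filter (fun j : Fin K => (j : ℕ) < r), a j * W j := by
    intro r h1 h2
    have := hHM r (Finset.mem_Icc.mpr ⟨h1, h2⟩)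
    rw [hHeq r] at this
    calc (∑ j ∈ Finset.univ.filter (fun j : Fin K => (j : ℕ) < r), W j) ^ 2
        = ((∑ j ∈ Finset.univ.filter (fun j : Fin K => (j : ℕ) < r), W j) ^ 2 /
          (∑ j ∈ Finset.univ.filter (fun j : Fin K => (j : ℕ) < r), a j * W j)) *
          (∑ j ∈ Finset.univ.filter (fun j : Fin K => (j : ℕ) < r), a j * W j) := by
          field_simp [(hDenpos r h1).ne']
      _ ≤ M * _ := mul_le_mul_of_nonneg_right this (hDenpos r h1).le
  -- upper bound
  have hub : ∀ t ∈ {t : ℝ | ∃ z : Fin K → ℝ,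
      (∀ i, 0 ≤ z i ∧ z i ≤ x i) ∧ 0 < D z ∧ t = Tr z}, t ≤ M := by
    rintro t ⟨z, hz, hDz, rfl⟩
    set w : Fin K → ℝ := fun j => (1 - γ (σ j)) * z (σ j) with hw_def
    have hw : ∀ j, 0 ≤ w j ∧ w j ≤ W j := by
      intro j
      constructor
      · exact mul_nonneg (by linarith [(hγ01 (σ j)).2]) (hz (σ j)).1
      · exact mul_le_mul_of_nonneg_left (hz (σ j)).2 (by linarith [(hγ01 (σ j)).2])
    have hsum_eq : ∑ j, w j = ∑ i, (1 - γ i) * z i := by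
      exact Equiv.sum_comp σ (fun i => (1 - γ i) * z i)
    have hkey := prefix_key K a W hapos hWpos hmono M hM0 hMr w hw
    have haw_le : ∑ j, a j * w j ≤ D z := by
      rw [hD]
      have := Equiv.sum_comp σ (fun i => α i * ((1 - γ i) * z i))
      calc ∑ j, a j * w j = ∑ i, α i * ((1 - γ i) * z i) := this
        _ ≤ ∑ i, γ i * (1 - γ i) * z i * (1 - z i / n i) := by
            refine Finset.sum_le_sum (fun i _ => ?_)
            rw [hα]
            have hzx : z i / n i ≤ x i / n i :=
              div_le_div_of_nonneg_right (hz i).2 (hn i).le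
            have h1 : 1 - x i / n i ≤ 1 - z i / n i := by linarith
            have h2 : 0 ≤ γ i * (1 - γ i) * z i :=
              mul_nonneg (mul_nonneg (hγ01 i).1.le (by linarith [(hγ01 i).2])) (hz i).1
            nlinarith [h2, h1]
    rw [hTr]
    dsimp only
    rw [div_le_iff₀ hDz]
    calc (∑ i, (1 - γ i) * z i) ^ 2 = (∑ j, w j) ^ 2 := by rw [hsum_eq]
      _ ≤ M * ∑ j, a j * w j := hkey
      _ ≤ M * D z := mul_le_mul_of_nonneg_left haw_le hM0
  -- attainment
  obtain ⟨r, hrmem, hrmax⟩ := Finset.exists_mem_eq_sup' (Finset.nonempty_Icc.mpr hK) H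
  obtain ⟨hr1, hrK⟩ := Finset.mem_Icc.mp hrmem
  set z : Fin K → ℝ := fun i => if ((σ.symm i : Fin K) : ℕ) < r then x i else 0 with hz_def
  have hzfeas : ∀ i, 0 ≤ z i ∧ z i ≤ x i := by
    intro i
    rw [hz_def]; dsimp only
    split_ifs
    · exact ⟨(hx i).1.le, le_rfl⟩
    · exact ⟨le_rfl, (hx i).1.le⟩
  have hzσ : ∀ j : Fin K, z (σ j) = if (j : ℕ) < r then x (σ j) else 0 := by
    intro j
    rw [hz_def]; dsimp only
    rw [Equiv.symm_apply_apply]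
  have hnum : ∑ i, (1 - γ i) * z i
      = ∑ j ∈ Finset.univ.filter (fun j : Fin K => (j : ℕ) < r), (1 - γ (σ j)) * x (σ j) := by
    rw [← Equiv.sum_comp σ (fun i => (1 - γ i) * z i), Finset.sum_filter]
    refine Finset.sum_congr rfl (fun j _ => ?_)
    rw [hzσ j]
    split_ifs <;> simp
  have hden : D z
      = ∑ j ∈ Finset.univ.filter (fun j : Fin K => (j : ℕ) < r),
          γ (σ j) * (1 - γ (σ j)) * x (σ j) * (1 - x (σ j) / n (σ j)) := by
    rw [hD]
    dsimp only
    rw [← Equiv.sum_comp σ (fun i => γ i * (1 - γ i) * z i * (1 - z i / n i)), Finset.sum_filter]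
    refine Finset.sum_congr rfl (fun j _ => ?_)
    rw [hzσ j]
    split_ifs <;> simp
  have hDzpos : 0 < D z := by
    rw [hden, hDen r]
    exact hDenpos r hr1
  have hTrz : Tr z = H r := by
    rw [hTr, hH]
    dsimp only
    rw [hnum, hden]
  have hmem : M ∈ {t : ℝ | ∃ z : Fin K → ℝ,
      (∀ i, 0 ≤ z i ∧ z i ≤ x i) ∧ 0 < D z ∧ t = Tr z} :=
    ⟨z, hzfeas, hDzpos, by rw [hTrz, hM_def, hrmax]⟩
  refine le_antisymm (Real.sSup_le hub hM0) (le_csSup ⟨M, hub⟩ hmem)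
end

section
/- Fix an integer K ≥ 1, reals nⁱ > 0 and n₁ⁱ with 0 < n₁ⁱ < nⁱ, γⁱ = n₁ⁱ/nⁱ, and bounds xⁱ with 0 < xⁱ ≤ min(n₁ⁱ, nⁱ − n₁ⁱ) for every i. Let σ_l be a permutation of {1,…,K} sorting (1−γⁱ)(1−xⁱ/nⁱ) ascendingly and σ_r a permutation sorting γⁱ(1−xⁱ/nⁱ) ascendingly. Define H_l^max = max_{1≤r≤K} (Σ_{j=1}^{r} γ^{σ_l(j)} x^{σ_l(j)})² / (Σ_{j=1}^{r} γ^{σ_l(j)}(1−γ^{σ_l(j)}) x^{σ_l(j)}(1−x^{σ_l(j)}/n^{σ_l(j)})) and H_r^max = max_{1≤r≤K} (Σ_{j=1}^{r} (1−γ^{σ_r(j)}) x^{σ_r(j)})² / (Σ_{j=1}^{r} γ^{σ_r(j)}(1−γ^{σ_r(j)}) x^{σ_r(j)}(1−x^{σ_r(j)}/n^{σ_r(j)})). Then the supremum of T_cmh^max(z) = max(T_l(z), T_r(z)) over {z : 0 ≤ zⁱ ≤ xⁱ for all i, D(z) > 0} equals max(H_l^max, H_r^max); i.e. Algorithm 2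 of the paper computes the pruning bound T_prune exactly. -/
open Finset


lemma qlem (A B ρ s u M : ℝ) (hs : 0 ≤ s) (hu : 0 ≤ u)
    (h1 : (A - s)^2 ≤ M*(B - s*ρ)) (h2 : (A + u)^2 ≤ M*(B + u*ρ)) : A^2 ≤ M*B := by
  rcases eq_or_lt_of_le hu with h|h
  · subst h; simpa using h2
  · nlinarith [mul_le_mul_of_nonneg_left h1 h.le, mul_le_mul_of_nonneg_left h2 hs,
      mul_nonneg hs hu, mul_pos (lt_of_le_of_lt hs (by linarith : s < s + u)) h]

lemma dc_prefix {K : ℕ} (S : Finset (Fin K))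
    (hdc : ∀ i j : Fin K, i ≤ j → j ∈ S → i ∈ S) :
    S = Finset.univ.filter (fun j : Fin K => (j : ℕ) < S.card) := by
  ext j
  simp only [mem_filter, mem_univ, true_and]
  constructor
  · intro hj
    have h1 : Finset.Iic j ⊆ S := fun k hk => hdc k j (Finset.mem_Iic.mp hk) hj
    have := Finset.card_le_card h1
    rw [Fin.card_Iic] at this; omega
  · intro hj
    by_contra hjS
    have h2 : S ⊆ Finset.Iio j := by
      intro k hk
      rw [Finset.mem_Iio]
      by_contra h
      exact hjS (hdc j k (not_lt.mp h) hk)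
    have := Finset.card_le_card h2
    rw [Fin.card_Iio] at this; omega

lemma subset_le {K : ℕ} (a ρ : Fin K → ℝ) (ha : ∀ i, 0 < a i)
    (hmono : ∀ i j : Fin K, i ≤ j → ρ i ≤ ρ j) (M : ℝ) (hM : 0 ≤ M)
    (hpre : ∀ r : ℕ, 1 ≤ r → r ≤ K →
      (∑ j ∈ Finset.univ.filter (fun j : Fin K => (j : ℕ) < r), a j)^2 ≤
        M * ∑ j ∈ Finset.univ.filter (fun j : Fin K => (j : ℕ) < r), a j * ρ j)
    (S : Finset (Fin K)) :
    (∑ i ∈ S, a i)^2 ≤ M * ∑ i ∈ S, a i * ρ i := by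
  set F : Finset (Fin K) → Finset (Fin K × Fin K) :=
    fun S => (univ ×ˢ univ).filter (fun p => p.1 ∉ S ∧ p.2 ∈ S ∧ p.1 < p.2) with hF
  suffices h : ∀ N (S : Finset (Fin K)), (F S).card ≤ N →
      (∑ i ∈ S, a i)^2 ≤ M * ∑ i ∈ S, a i * ρ i from h (F S).card S le_rfl
  intro N
  induction N with
  | zero =>
    intro S hS
    -- F S empty: S downward closed
    have hdc : ∀ i j : Fin K, i ≤ j → j ∈ S → i ∈ S := by
      intro i j hij hj
      rcases eq_or_lt_of_le hij with h|h
      · exact h ▸ hj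
      · by_contra hi
        have : (i, j) ∈ F S := by
          simp [hF, hi, hj, h]
        have := Finset.card_pos.mpr ⟨_, this⟩
        omega
    rcases S.eq_empty_or_nonempty with h|h
    · subst h; simp
    · have hcard1 : 1 ≤ S.card := Finset.card_pos.mpr h
      have hcardK : S.card ≤ K := by
        simpa using Finset.card_le_card (Finset.subset_univ S)
      have := hpre S.card hcard1 hcardK
      rwa [← dc_prefix S hdc] at this
  | succ N ih =>
    intro S hS
    by_cases hΦ : (F S).card = 0
    · exact ih S (by omega)
    have hFne : (F S).Nonempty := Finset.card_pos.mp (by omega)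
    obtain ⟨p, hp⟩ := hFne
    simp only [hF, Finset.mem_filter] at hp
    obtain ⟨-, hp1, hp2, hp3⟩ := hp
    have hSne : S.Nonempty := ⟨p.2, hp2⟩
    set j : Fin K := S.max' hSne with hj
    have hjS : j ∈ S := S.max'_mem hSne
    have hTne : (univ.filter (fun k : Fin K => k ∉ S)).Nonempty :=
      ⟨p.1, by simp [hp1]⟩
    set i : Fin K := (univ.filter (fun k : Fin K => k ∉ S)).min' hTne with hi
    have hiS : i ∉ S := by
      have := Finset.min'_mem _ hTne
      simpa using this
    have hij : i < j := by
      have h1 : i ≤ p.1 := Finset.min'_le _ _ (by simp [hp1])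
      have h2 : p.2 ≤ j := S.le_max' _ hp2
      exact lt_of_lt_of_le (lt_of_le_of_lt h1 hp3) h2
    have himin : ∀ k : Fin K, k < i → k ∈ S := by
      intro k hk
      by_contra hkS
      exact absurd (Finset.min'_le _ k (by simp [hkS])) (not_le.mpr hk)
    -- S1 = erase j, S2 = insert i
    have hFij : (i, j) ∈ F S := by simp [hF, hiS, hjS, hij]
    have hsub1 : F (S.erase j) ⊆ F S := by
      intro q hq
      simp only [hF, Finset.mem_filter, Finset.mem_product, Finset.mem_univ, true_and,
        Finset.mem_erase] at hq ⊢
      obtain ⟨hq1, ⟨hq2a, hq2b⟩, hq3⟩ := hq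
      refine ⟨?_, hq2b, hq3⟩
      intro hq1S
      rcases eq_or_ne q.1 j with h|h
      · exact absurd (S.le_max' _ hq2b) (not_le.mpr (show j < q.2 from h ▸ hq3))
      · exact hq1 ⟨h, hq1S⟩
    have hcard1 : (F (S.erase j)).card ≤ N := by
      have hss : F (S.erase j) ⊂ F S :=
        ⟨hsub1, fun hss => by
          have := hss hFij
          simp [hF, Finset.mem_erase] at this⟩
      have := Finset.card_lt_card hss
      omega
    have hsub2 : F (insert i S) ⊆ F S := by
      intro q hq
      simp only [hF, Finset.mem_filter, Finset.mem_product, Finset.mem_univ, true_and,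
        Finset.mem_insert] at hq ⊢
      obtain ⟨hq1, hq2, hq3⟩ := hq
      have hq1' : q.1 ∉ S := fun h => hq1 (Or.inr h)
      refine ⟨hq1', ?_, hq3⟩
      rcases hq2 with h|h
      · exact absurd (himin q.1 (show q.1 < i from h ▸ hq3)) hq1'
      · exact h
    have hcard2 : (F (insert i S)).card ≤ N := by
      have hss : F (insert i S) ⊂ F S :=
        ⟨hsub2, fun hss => by
          have := hss hFij
          simp [hF] at this⟩
      have := Finset.card_lt_card hss
      omega
    have ih1 := ih _ hcard1
    have ih2 := ih _ hcard2
    rw [Finset.sum_erase_eq_sub hjS, Finset.sum_erase_eq_sub hjS] at ih1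
    rw [Finset.sum_insert hiS, Finset.sum_insert hiS] at ih2
    have hρij : ρ i ≤ ρ j := hmono i j hij.le
    have h1' : (∑ i ∈ S, a i - a j)^2 ≤ M * (∑ i ∈ S, a i * ρ i - a j * ρ i) := by
      refine le_trans ih1 (mul_le_mul_of_nonneg_left ?_ hM)
      have := mul_le_mul_of_nonneg_left hρij (ha j).le
      linarith
    have h2' : (∑ i ∈ S, a i + a i)^2 ≤ M * (∑ k ∈ S, a k * ρ k + a i * ρ i) := by
      rw [add_comm (a i) _, add_comm (a i * ρ i) _] at ih2
      exact ih2
    exact qlem _ _ (ρ i) (a j) (a i) M (ha j).le (ha i).le h1' (by linarith [h2'])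

lemma sum_update_mul {K : ℕ} (w g : Fin K → ℝ) (k : Fin K) (c : ℝ) :
    ∑ x, (Function.update w k c x) * g x = ∑ x, w x * g x - w k * g k + c * g k := by
  rw [← Finset.sum_erase_add _ _ (Finset.mem_univ k),
      ← Finset.sum_erase_add _ (fun x => w x * g x) (Finset.mem_univ k)]
  rw [Finset.sum_congr rfl (fun i hi => by
    rw [Function.update_of_ne (Finset.ne_of_mem_erase hi)])]
  simp only [Function.update_self]
  ring

lemma core {K : ℕ} (a ρ : Fin K → ℝ) (ha : ∀ i, 0 < a i)
    (hmono : ∀ i j : Fin K, i ≤ j → ρ i ≤ ρ j) (M : ℝ) (hM : 0 ≤ M)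
    (hpre : ∀ r : ℕ, 1 ≤ r → r ≤ K →
      (∑ j ∈ Finset.univ.filter (fun j : Fin K => (j : ℕ) < r), a j)^2 ≤
        M * ∑ j ∈ Finset.univ.filter (fun j : Fin K => (j : ℕ) < r), a j * ρ j)
    (w : Fin K → ℝ) (hw : ∀ i, 0 ≤ w i ∧ w i ≤ a i) :
    (∑ i, w i)^2 ≤ M * ∑ i, w i * ρ i := by
  suffices h : ∀ t : Finset (Fin K), ∀ w : Fin K → ℝ,
      (∀ i, 0 ≤ w i ∧ w i ≤ a i) → (∀ i, i ∉ t → w i = 0 ∨ w i = a i) →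
      (∑ i, w i)^2 ≤ M * ∑ i, w i * ρ i by
    exact h univ w hw (fun i hi => absurd (Finset.mem_univ i) hi)
  intro t
  induction t using Finset.induction_on with
  | empty =>
    intro w hw hvert
    set S := Finset.univ.filter (fun i => w i = a i) with hSdef
    have e1 : ∑ i, w i = ∑ i ∈ S, a i := by
      rw [hSdef, Finset.sum_filter]
      refine Finset.sum_congr rfl (fun i _ => ?_)
      split_ifs with hc
      · exact hc
      · rcases hvert i (Finset.notMem_empty i) with h|h
        · exact h
        · exact absurd h hc
    have e2 : ∑ i, w i * ρ i = ∑ i ∈ S, a i * ρ i := by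
      rw [hSdef, Finset.sum_filter]
      refine Finset.sum_congr rfl (fun i _ => ?_)
      split_ifs with hc
      · rw [hc]
      · rcases hvert i (Finset.notMem_empty i) with h|h
        · rw [h, zero_mul]
        · exact absurd h hc
    rw [e1, e2]
    exact subset_le a ρ ha hmono M hM hpre S
  | insert k t hk ih =>
    intro w hw hvert
    have h0 := ih (Function.update w k 0)
      (fun i => by
        rcases eq_or_ne i k with h|h
        · subst h; simp [Function.update_self, (ha i).le]
        · simp [Function.update_of_ne h, hw i])
      (fun i hi => by
        rcases eq_or_ne i k with h|h
        · subst h; simp [Function.update_self]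
        · rw [Function.update_of_ne h]
          exact hvert i (by simp [hi, h]))
    have h1 := ih (Function.update w k (a k))
      (fun i => by
        rcases eq_or_ne i k with h|h
        · subst h; simp [Function.update_self, (ha i).le]
        · simp [Function.update_of_ne h, hw i])
      (fun i hi => by
        rcases eq_or_ne i k with h|h
        · subst h; simp [Function.update_self]
        · rw [Function.update_of_ne h]
          exact hvert i (by simp [hi, h]))
    have s0 : ∑ x, Function.update w k 0 x = ∑ x, w x - w k := by
      have := sum_update_mul w (fun _ => 1) k 0
      simpa using this
    have s0' : ∑ x, Function.update w k 0 x * ρ x = ∑ x, w x * ρ x - w k * ρ k := by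
      have := sum_update_mul w ρ k 0
      simpa using this
    have s1 : ∑ x, Function.update w k (a k) x = ∑ x, w x + (a k - w k) := by
      have := sum_update_mul w (fun _ => 1) k (a k)
      simp at this
      linarith
    have s1' : ∑ x, Function.update w k (a k) x * ρ x
        = ∑ x, w x * ρ x + (a k - w k) * ρ k := by
      have := sum_update_mul w ρ k (a k)
      rw [this]; ring
    rw [s0, s0'] at h0
    rw [s1, s1'] at h1
    exact qlem _ _ (ρ k) (w k) (a k - w k) M (hw k).1 (by linarith [(hw k).2])
      (by rw [mul_comm (w k) (ρ k)] at h0 ⊢; exact h0) h1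

lemma side {K : ℕ} (hK : 1 ≤ K) (b e x n : Fin K → ℝ)
    (hb : ∀ i, 0 < b i) (he : ∀ i, 0 < e i)
    (hx : ∀ i, 0 < x i) (hxn : ∀ i, x i < n i) (hn : ∀ i, 0 < n i)
    (σ : Equiv.Perm (Fin K))
    (hσ : ∀ i j : Fin K, i ≤ j →
      e (σ i) * (1 - x (σ i) / n (σ i)) ≤ e (σ j) * (1 - x (σ j) / n (σ j)))
    (H : ℕ → ℝ)
    (hH : ∀ r : ℕ, H r =
      (∑ j ∈ Finset.univ.filter (fun j : Fin K => (j : ℕ) < r), b (σ j) * x (σ j)) ^ 2 /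
      (∑ j ∈ Finset.univ.filter (fun j : Fin K => (j : ℕ) < r),
        b (σ j) * e (σ j) * x (σ j) * (1 - x (σ j) / n (σ j))))
    (M : ℝ) (hM : M = (Finset.Icc 1 K).sup' (Finset.nonempty_Icc.mpr hK) H) :
    (∀ z : Fin K → ℝ, (∀ i, 0 ≤ z i ∧ z i ≤ x i) →
      (∑ i, b i * z i) ^ 2 ≤ M * ∑ i, b i * e i * z i * (1 - z i / n i))
    ∧ 0 ≤ M
    ∧ ∃ z : Fin K → ℝ, (∀ i, 0 ≤ z i ∧ z i ≤ x i) ∧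
        (0 < ∑ i, b i * e i * z i * (1 - z i / n i)) ∧
        (∑ i, b i * z i) ^ 2 =
          M * ∑ i, b i * e i * z i * (1 - z i / n i) := by
  have hxnq : ∀ i, 0 < 1 - x i / n i := by
    intro i
    have := hn i
    rw [sub_pos, div_lt_one this]
    exact hxn i
  -- denominator positivity for prefixes
  have hden : ∀ r : ℕ, 1 ≤ r →
      0 < ∑ j ∈ Finset.univ.filter (fun j : Fin K => (j : ℕ) < r),
        b (σ j) * e (σ j) * x (σ j) * (1 - x (σ j) / n (σ j)) := by
    intro r hr
    apply Finset.sum_pos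
    · intro j _
      have := hb (σ j); have := he (σ j); have := hx (σ j); have := hxnq (σ j)
      positivity
    · exact ⟨⟨0, by omega⟩, by simpa using (show 0 < r by omega)⟩
  have hHnn : ∀ r : ℕ, 1 ≤ r → 0 ≤ H r := by
    intro r hr
    rw [hH r]
    exact div_nonneg (sq_nonneg _) (hden r hr).le
  have hM0 : 0 ≤ M := by
    rw [hM]
    exact le_trans (hHnn K hK) (Finset.le_sup' H (by simp [Finset.mem_Icc]; omega))
  have hpre : ∀ r : ℕ, 1 ≤ r → r ≤ K →
      (∑ j ∈ Finset.univ.filter (fun j : Fin K => (j : ℕ) < r),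
        b (σ j) * x (σ j)) ^ 2 ≤
      M * ∑ j ∈ Finset.univ.filter (fun j : Fin K => (j : ℕ) < r),
        (b (σ j) * x (σ j)) * (e (σ j) * (1 - x (σ j) / n (σ j))) := by
    intro r hr1 hr2
    have hHM : H r ≤ M := by
      rw [hM]
      exact Finset.le_sup' H (by simp [Finset.mem_Icc]; omega)
    have heq : ∑ j ∈ Finset.univ.filter (fun j : Fin K => (j : ℕ) < r),
        (b (σ j) * x (σ j)) * (e (σ j) * (1 - x (σ j) / n (σ j))) =
        ∑ j ∈ Finset.univ.filter (fun j : Fin K => (j : ℕ) < r),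
        b (σ j) * e (σ j) * x (σ j) * (1 - x (σ j) / n (σ j)) :=
      Finset.sum_congr rfl (fun j _ => by ring)
    rw [heq]
    have h1 : (∑ j ∈ Finset.univ.filter (fun j : Fin K => (j : ℕ) < r),
        b (σ j) * x (σ j)) ^ 2 = H r *
        ∑ j ∈ Finset.univ.filter (fun j : Fin K => (j : ℕ) < r),
        b (σ j) * e (σ j) * x (σ j) * (1 - x (σ j) / n (σ j)) := by
      rw [hH r, div_mul_cancel₀]
      exact (hden r hr1).ne'
    rw [h1]
    exact mul_le_mul_of_nonneg_right hHM (hden r hr1).le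
  have hcore := core (fun j => b (σ j) * x (σ j))
    (fun j => e (σ j) * (1 - x (σ j) / n (σ j)))
    (fun j => mul_pos (hb _) (hx _)) hσ M hM0 hpre
  refine ⟨?_, hM0, ?_⟩
  · -- upper bound
    intro z hz
    have hw : ∀ j : Fin K, 0 ≤ b (σ j) * z (σ j) ∧
        b (σ j) * z (σ j) ≤ b (σ j) * x (σ j) := by
      intro j
      exact ⟨mul_nonneg (hb _).le (hz _).1,
        mul_le_mul_of_nonneg_left (hz _).2 (hb _).le⟩
    have h := hcore (fun j => b (σ j) * z (σ j)) hw
    have e1 : ∑ j, b (σ j) * z (σ j) = ∑ i, b i * z i :=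
      Equiv.sum_comp σ (fun i => b i * z i)
    have e2 : ∑ j, (b (σ j) * z (σ j)) * (e (σ j) * (1 - x (σ j) / n (σ j))) =
        ∑ i, (b i * z i) * (e i * (1 - x i / n i)) :=
      Equiv.sum_comp σ (fun i => (b i * z i) * (e i * (1 - x i / n i)))
    rw [e1, e2] at h
    refine le_trans h (mul_le_mul_of_nonneg_left (Finset.sum_le_sum ?_) hM0)
    intro i _
    have hz1 : 1 - x i / n i ≤ 1 - z i / n i := by
      have h2 := (hz i).2
      have hni := hn i
      have : z i / n i ≤ x i / n i := by gcongr
      linarith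
    calc b i * z i * (e i * (1 - x i / n i))
        ≤ b i * z i * (e i * (1 - z i / n i)) := by
          refine mul_le_mul_of_nonneg_left ?_ (mul_nonneg (hb i).le (hz i).1)
          exact mul_le_mul_of_nonneg_left hz1 (he i).le
      _ = b i * e i * z i * (1 - z i / n i) := by ring
  · -- attainment
    obtain ⟨t, ht, htM⟩ := Finset.exists_mem_eq_sup' (Finset.nonempty_Icc.mpr hK) H
    rw [Finset.mem_Icc] at ht
    set z : Fin K → ℝ := fun i => if ((σ.symm i : Fin K) : ℕ) < t then x i else 0
      with hzdef
    have hzfeas : ∀ i, 0 ≤ z i ∧ z i ≤ x i := by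
      intro i
      simp only [hzdef]
      split_ifs with h
      · exact ⟨(hx i).le, le_rfl⟩
      · exact ⟨le_rfl, (hx i).le⟩
    have ez : ∀ j : Fin K, z (σ j) = if (j : ℕ) < t then x (σ j) else 0 := by
      intro j
      rw [hzdef]
      simp [Equiv.symm_apply_apply]
    have e1 : ∑ i, b i * z i = ∑ j ∈ Finset.univ.filter (fun j : Fin K => (j : ℕ) < t),
        b (σ j) * x (σ j) := by
      rw [← Equiv.sum_comp σ (fun i => b i * z i), Finset.sum_filter]
      refine Finset.sum_congr rfl (fun j _ => ?_)
      rw [ez j]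
      split_ifs with h
      · rfl
      · exact mul_zero _
    have e2 : ∑ i, b i * e i * z i * (1 - z i / n i) =
        ∑ j ∈ Finset.univ.filter (fun j : Fin K => (j : ℕ) < t),
        b (σ j) * e (σ j) * x (σ j) * (1 - x (σ j) / n (σ j)) := by
      rw [← Equiv.sum_comp σ (fun i => b i * e i * z i * (1 - z i / n i)),
        Finset.sum_filter]
      refine Finset.sum_congr rfl (fun j _ => ?_)
      rw [ez j]
      split_ifs with h
      · rfl
      · ring
    refine ⟨z, hzfeas, ?_, ?_⟩
    · rw [e2]; exact hden t ht.1
    · rw [e1, e2, hM, htM, hH t, div_mul_cancel₀]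
      exact (hden t ht.1).ne'

/-- Correctness of Algorithm 2. With `σl` sorting
`(1 − γ i)(1 − x i / n i)` ascendingly and `σr` sorting `γ i (1 − x i / n i)`
ascendingly, the supremum of `T_cmh^max z = max (T_l z) (T_r z)` over
`{z : 0 ≤ z i ≤ x i, D z > 0}` equals `max H_l^max H_r^max`, the maximum of the
respective prefix ratios: Algorithm 2 computes the pruning bound `T_prune` exactly. -/
theorem algorithm2_computes_Tprune
    (K : ℕ) (hK : 1 ≤ K)
    (n n1 : Fin K → ℝ)
    (hn : ∀ i, 0 < n i)
    (hn1 : ∀ i, 0 < n1 i ∧ n1 i < n i)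
    (γ : Fin K → ℝ) (hγ : γ = fun i => n1 i / n i)
    (D : (Fin K → ℝ) → ℝ)
    (hD : D = fun z => ∑ i, γ i * (1 - γ i) * z i * (1 - z i / n i))
    (Tl : (Fin K → ℝ) → ℝ) (hTl : Tl = fun z => (∑ i, γ i * z i) ^ 2 / D z)
    (Tr : (Fin K → ℝ) → ℝ) (hTr : Tr = fun z => (∑ i, (1 - γ i) * z i) ^ 2 / D z)
    (x : Fin K → ℝ)
    (hx : ∀ i, 0 < x i ∧ x i ≤ min (n1 i) (n i - n1 i))
    (σl σr : Equiv.Perm (Fin K))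
    (hσl : ∀ i j : Fin K, i ≤ j →
      (1 - γ (σl i)) * (1 - x (σl i) / n (σl i)) ≤
      (1 - γ (σl j)) * (1 - x (σl j) / n (σl j)))
    (hσr : ∀ i j : Fin K, i ≤ j →
      γ (σr i) * (1 - x (σr i) / n (σr i)) ≤
      γ (σr j) * (1 - x (σr j) / n (σr j)))
    (Hl Hr : ℕ → ℝ)
    (hHl : Hl = fun r =>
      (∑ j ∈ Finset.univ.filter (fun j : Fin K => (j : ℕ) < r),
        γ (σl j) * x (σl j)) ^ 2 /
      (∑ j ∈ Finset.univ.filter (fun j : Fin K => (j : ℕ) < r),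
        γ (σl j) * (1 - γ (σl j)) * x (σl j) * (1 - x (σl j) / n (σl j))))
    (hHr : Hr = fun r =>
      (∑ j ∈ Finset.univ.filter (fun j : Fin K => (j : ℕ) < r),
        (1 - γ (σr j)) * x (σr j)) ^ 2 /
      (∑ j ∈ Finset.univ.filter (fun j : Fin K => (j : ℕ) < r),
        γ (σr j) * (1 - γ (σr j)) * x (σr j) * (1 - x (σr j) / n (σr j)))) :
    sSup {t : ℝ | ∃ z : Fin K → ℝ,
        (∀ i, 0 ≤ z i ∧ z i ≤ x i) ∧ 0 < D z ∧ t = max (Tl z) (Tr z)} =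
      max ((Finset.Icc 1 K).sup' (Finset.nonempty_Icc.mpr hK) Hl)
          ((Finset.Icc 1 K).sup' (Finset.nonempty_Icc.mpr hK) Hr) := by
  
  have hγi : ∀ i, 0 < γ i ∧ γ i < 1 := by
    intro i
    rw [hγ]
    refine ⟨div_pos (hn1 i).1 (hn i), (div_lt_one (hn i)).mpr (hn1 i).2⟩
  have hx0 : ∀ i, 0 < x i := fun i => (hx i).1
  have hxn : ∀ i, x i < n i := by
    intro i
    have h := (hx i).2
    have := (hn1 i).1
    have := min_le_right (n1 i) (n i - n1 i)
    linarith
  set Ml := (Finset.Icc 1 K).sup' (Finset.nonempty_Icc.mpr hK) Hl with hMl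
  set Mr := (Finset.Icc 1 K).sup' (Finset.nonempty_Icc.mpr hK) Hr with hMr
  obtain ⟨ubl, hMl0, zl, hzl, hDzl, heql⟩ :=
    side hK γ (fun i => 1 - γ i) x n (fun i => (hγi i).1)
      (fun i => by show (0:ℝ) < 1 - γ i; linarith [(hγi i).2]) hx0 hxn hn σl hσl Hl
      (fun r => by rw [hHl]) Ml hMl
  obtain ⟨ubr, hMr0, zr, hzr, hDzr, heqr⟩ :=
    side hK (fun i => 1 - γ i) γ x n
      (fun i => by show (0:ℝ) < 1 - γ i; linarith [(hγi i).2])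
      (fun i => (hγi i).1) hx0 hxn hn σr hσr Hr
      (fun r => by
        simp only [hHr]
        congr 1
        exact Finset.sum_congr rfl (fun j _ => by ring)) Mr hMr
  -- translate the D-sums
  have hDl : ∀ z : Fin K → ℝ,
      (∑ i, γ i * (1 - γ i) * z i * (1 - z i / n i)) = D z := by
    intro z; rw [hD]
  have hDr : ∀ z : Fin K → ℝ,
      (∑ i, (1 - γ i) * γ i * z i * (1 - z i / n i)) = D z := by
    intro z; rw [hD]
    exact Finset.sum_congr rfl (fun i _ => by ring)
  -- upper bound
  have hub : ∀ t ∈ {t : ℝ | ∃ z : Fin K → ℝ,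
      (∀ i, 0 ≤ z i ∧ z i ≤ x i) ∧ 0 < D z ∧ t = max (Tl z) (Tr z)},
      t ≤ max Ml Mr := by
    rintro t ⟨z, hz, hDz, rfl⟩
    have h1 : Tl z ≤ Ml := by
      rw [hTl]
      rw [div_le_iff₀ hDz]
      have := ubl z hz
      rw [hDl z] at this
      exact this
    have h2 : Tr z ≤ Mr := by
      rw [hTr]
      rw [div_le_iff₀ hDz]
      have := ubr z hz
      rw [hDr z] at this
      exact this
    exact max_le (h1.trans (le_max_left _ _)) (h2.trans (le_max_right _ _))
  rw [hDl zl] at hDzl heql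
  rw [hDr zr] at hDzr heqr
  have hTlzl : Tl zl = Ml := by
    rw [hTl]
    rw [div_eq_iff hDzl.ne']
    exact heql
  have hTrzr : Tr zr = Mr := by
    rw [hTr]
    rw [div_eq_iff hDzr.ne']
    exact heqr
  have hmeml : max (Tl zl) (Tr zl) ∈ {t : ℝ | ∃ z : Fin K → ℝ,
      (∀ i, 0 ≤ z i ∧ z i ≤ x i) ∧ 0 < D z ∧ t = max (Tl z) (Tr z)} :=
    ⟨zl, hzl, hDzl, rfl⟩
  have hmemr : max (Tl zr) (Tr zr) ∈ {t : ℝ | ∃ z : Fin K → ℝ,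
      (∀ i, 0 ≤ z i ∧ z i ≤ x i) ∧ 0 < D z ∧ t = max (Tl z) (Tr z)} :=
    ⟨zr, hzr, hDzr, rfl⟩
  have hbdd : BddAbove {t : ℝ | ∃ z : Fin K → ℝ,
      (∀ i, 0 ≤ z i ∧ z i ≤ x i) ∧ 0 < D z ∧ t = max (Tl z) (Tr z)} :=
    ⟨max Ml Mr, hub⟩
  refine le_antisymm (csSup_le ⟨_, hmeml⟩ hub) (max_le ?_ ?_)
  · calc Ml = Tl zl := hTlzl.symm
      _ ≤ max (Tl zl) (Tr zl) := le_max_left _ _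
      _ ≤ sSup _ := le_csSup hbdd hmeml
  · calc Mr = Tr zr := hTrzr.symm
      _ ≤ max (Tl zr) (Tr zr) := le_max_right _ _
      _ ≤ sSup _ := le_csSup hbdd hmemr
end
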